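/- arXiv:math/9412230 — 11 statements merged into one kernel-verified Lean document; each statement's English description precedes it below -/
import Mathlib

section
/- Let S = Sym(ω) and suppose S = ⋃_{i<λ} G_i is the union of a chain of proper subgroups G_i (i < λ). Then for every infinite subset X ⊆ ω and every i < λ, the setwise stabilizer of X in G_i does not induce the full symmetric group Sym(X) on X; consequently, if ω = ⋃_{n<ω} X_n is a partition into infinitely many infinite sets, i_n < λ are given indices, and for each n there exists π_n ∈ Sym(X_n) such that g↾X_n ≠ π_n for all g ∈ G_{i_n}, then the union π of the π_n is a permutation of ω satisfying π ∉ G_{i_n} for all n. -/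
open Equiv Set

theorem Equiv.Perm.apply_inv_self {α : Type*} (f : Equiv.Perm α) (x : α) : f (f⁻¹ x) = x :=
  f.apply_symm_apply x

theorem Equiv.Perm.inv_apply_self {α : Type*} (f : Equiv.Perm α) (x : α) : f⁻¹ (f x) = x :=
  f.symm_apply_apply x

noncomputable section

namespace MN

open Classical in
lemma perm_mem_iff (f : Equiv.Perm ℕ) (B : Set ℕ) (h : ∀ x ∉ B, f x = x) :
    ∀ x, x ∈ B ↔ f x ∈ B := by
  intro x
  constructor
  · intro hx
    by_contra hfx
    have h1 : f (f x) = f x := h _ hfx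
    have h2 : f x = x := f.injective h1
    rw [h2] at hfx; exact hfx hx
  · intro hfx
    by_contra hx
    rw [h x hx] at hfx
    exact hx hfx

noncomputable def eqnat (A : Set ℕ) (hA : A.Infinite) : ↥A ≃ ℕ := by
  haveI := hA.to_subtype
  haveI : Encodable ↥A := Encodable.ofCountable _
  haveI : Denumerable ↥A := Denumerable.ofEncodableOfInfinite _
  exact Denumerable.eqv ↥A

lemma exists_extension {D R : Set ℕ} {g : ℕ → ℕ} (hbij : Set.BijOn g D R)
    (hD : Dᶜ.Infinite) (hR : Rᶜ.Infinite) : ∃ π : Equiv.Perm ℕ, ∀ x ∈ D, π x = g x := by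
  classical
  let e1 : ↥D ≃ ↥R := hbij.equiv g
  let e2 : ↥(Dᶜ) ≃ ↥(Rᶜ) := (eqnat _ hD).trans (eqnat _ hR).symm
  refine ⟨((Set.sumCompl D).symm.trans ((e1.sumCongr e2).trans (Set.sumCompl R))), ?_⟩
  intro x hx
  simp only [trans_apply, Set.sumCompl_symm_apply_of_mem hx, sumCongr_apply, Sum.map_inl]
  rw [Set.sumCompl_apply_inl]
  rfl

lemma exists_extension_seq {u v : ℕ → ℕ} (hu : Function.Injective u)
    (hv : Function.Injective v) (hcu : (Set.range u)ᶜ.Infinite)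
    (hcv : (Set.range v)ᶜ.Infinite) : ∃ χ : Equiv.Perm ℕ, ∀ m, χ (u m) = v m := by
  classical
  have hbij : Set.BijOn (v ∘ Function.invFun u) (Set.range u) (Set.range v) := by
    constructor
    · rintro x ⟨m, rfl⟩
      simp only [Function.comp_apply, Function.leftInverse_invFun hu m]
      exact ⟨m, rfl⟩
    constructor
    · rintro x ⟨m, rfl⟩ y ⟨k, rfl⟩ hxy
      simp only [Function.comp_apply, Function.leftInverse_invFun hu m,
        Function.leftInverse_invFun hu k] at hxy
      exact congrArg u (hv hxy)
    · rintro x ⟨m, rfl⟩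
      exact ⟨u m, ⟨m, rfl⟩, by simp [Function.leftInverse_invFun hu m]⟩
  obtain ⟨π, hπ⟩ := exists_extension hbij hcu hcv
  exact ⟨π, fun m => by simpa [Function.leftInverse_invFun hu m] using hπ (u m) ⟨m, rfl⟩⟩

lemma split_infinite (A : Set ℕ) (hA : A.Infinite) :
    ∃ B ⊆ A, B.Infinite ∧ (A \ B).Infinite := by
  classical
  let e := eqnat A hA
  refine ⟨Set.range (fun n => (e.symm (2 * n) : ℕ)), ?_, ?_, ?_⟩
  · rintro x ⟨n, rfl⟩; exact (e.symm (2 * n)).2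
  · apply Set.infinite_range_of_injective
    intro a b hab
    have := e.symm.injective (Subtype.ext hab)
    omega
  · apply Set.Infinite.mono (s := Set.range (fun n => (e.symm (2 * n + 1) : ℕ)))
    · rintro x ⟨n, rfl⟩
      refine ⟨(e.symm (2 * n + 1)).2, ?_⟩
      rintro ⟨m, hm⟩
      have := e.symm.injective (Subtype.ext hm)
      omega
    · apply Set.infinite_range_of_injective
      intro a b hab
      have := e.symm.injective (Subtype.ext hab)
      omega


open Classical in
lemma gen_aux {F F' : Set ℕ} (hdisj : Disjoint F F') (hC : ((F ∪ F')ᶜ).Infinite)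
    (H : Subgroup (Equiv.Perm ℕ))
    (h1 : ∀ f : Equiv.Perm ℕ, (∀ x ∈ F, f x = x) → f ∈ H)
    (h2 : ∀ f : Equiv.Perm ℕ, (∀ x ∈ F', f x = x) → f ∈ H)
    (f : Equiv.Perm ℕ)
    (hgood : ((((F ∪ F')ᶜ) ∪ F) \ (⇑f ⁻¹' F')).Infinite) : f ∈ H := by
  classical
  set C := (F ∪ F')ᶜ with hCdef
  have hCF : Disjoint C F' := by
    rw [Set.disjoint_left]; intro x hx hx'
    exact hx (Set.mem_union_right _ hx')
  have hCF2 : Disjoint C F := by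
    rw [Set.disjoint_left]; intro x hx hx'
    exact hx (Set.mem_union_left _ hx')
  set S := ⇑f ⁻¹' F' with hSdef
  obtain ⟨W1, hW1sub, hW1inf, hW2inf⟩ := split_infinite _ hgood
  obtain ⟨B, hBsub, hBinf, hCBinf⟩ := split_infinite C hC
  have hW1F' : ∀ x ∈ W1, x ∉ F' := fun x hx hx' => by
    rcases hW1sub hx with ⟨hx1, -⟩
    rcases hx1 with h | h
    · exact h (Set.mem_union_right _ hx')
    · exact Set.disjoint_left.mp hdisj h hx'
  have hW1S : ∀ x ∈ W1, x ∉ S := fun x hx => (hW1sub hx).2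
  set E1 := (S \ F') ∪ W1 with hE1def
  have hE1F' : ∀ x ∈ E1, x ∉ F' := by
    rintro x (⟨-, h⟩ | h)
    · exact h
    · exact hW1F' x h
  have hE1inf : E1.Infinite := hW1inf.mono (Set.subset_union_right)
  let eE1 : ↥E1 ≃ ℕ := eqnat _ hE1inf
  let eB : ↥B ≃ ℕ := eqnat _ hBinf
  set e2' : ℕ → ℕ := fun x => if h : x ∈ E1 then (eB.symm (eE1 ⟨x, h⟩) : ℕ) else 0 with he2'
  have he2'B : ∀ x ∈ E1, e2' x ∈ B := by
    intro x hx; simp only [he2', dif_pos hx]; exact (eB.symm _).2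
  have he2'inj : Set.InjOn e2' E1 := by
    intro x hx y hy hxy
    simp only [he2', dif_pos hx, dif_pos hy] at hxy
    have := eE1.injective (eB.symm.injective (Subtype.ext hxy))
    exact Subtype.ext_iff.mp this
  -- gamma2
  have hbij2 : Set.BijOn (fun x => if x ∈ F' then x else e2' x) (F' ∪ E1) (F' ∪ B) := by
    refine ⟨?_, ?_, ?_⟩
    · rintro x (hx | hx)
      · simp only [if_pos hx]; exact Set.mem_union_left _ hx
      · simp only [if_neg (hE1F' x hx)]; exact Set.mem_union_right _ (he2'B x hx)
    · rintro x (hx | hx) y (hy | hy) hxy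
      · simpa only [if_pos hx, if_pos hy] using hxy
      · exfalso
        simp only [if_pos hx, if_neg (hE1F' y hy)] at hxy
        rw [hxy] at hx
        exact Set.disjoint_left.mp hCF (hBsub (he2'B y hy)) hx
      · exfalso
        simp only [if_pos hy, if_neg (hE1F' x hx)] at hxy
        rw [← hxy] at hy
        exact Set.disjoint_left.mp hCF (hBsub (he2'B x hx)) hy
      · simp only [if_neg (hE1F' x hx), if_neg (hE1F' y hy)] at hxy
        exact he2'inj hx hy hxy
    · rintro y (hy | hy)
      · exact ⟨y, Set.mem_union_left _ hy, by simp [if_pos hy]⟩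
      · refine ⟨(eE1.symm (eB ⟨y, hy⟩) : ℕ), Set.mem_union_right _ (eE1.symm _).2, ?_⟩
        simp only [if_neg (hE1F' _ (eE1.symm _).2), he2', dif_pos (eE1.symm _).2]
        simp
  have hD2c : ((F' ∪ E1)ᶜ).Infinite := by
    apply hW2inf.mono
    rintro x ⟨hxW, hxW1⟩
    intro hmem
    rcases hmem with h | h
    · rcases hxW with ⟨h1', h2'⟩
      rcases h1' with hc | hf
      · exact hc (Set.mem_union_right _ h)
      · exact Set.disjoint_left.mp hdisj hf h
    · rcases h with ⟨hs, -⟩ | h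
      · exact hxW.2 hs
      · exact hxW1 h
  have hR2c : ((F' ∪ B)ᶜ).Infinite := by
    apply hCBinf.mono
    rintro x ⟨hxC, hxB⟩
    rintro (h | h)
    · exact Set.disjoint_left.mp hCF hxC h
    · exact hxB h
  obtain ⟨γ2, hγ2⟩ := exists_extension hbij2 hD2c hR2c
  have hγ2F' : ∀ x ∈ F', γ2 x = x := fun x hx => by
    rw [hγ2 x (Set.mem_union_left _ hx), if_pos hx]
  have hγ2mem : γ2 ∈ H := h2 γ2 hγ2F'
  set T := f * γ2⁻¹ with hTdef
  set P := ⇑T ⁻¹' F' with hPdef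
  have hPim : ∀ x ∈ P, γ2⁻¹ x ∈ S ∧ x ∈ F' ∪ B := by
    intro x hx
    have hTx : f (γ2⁻¹ x) ∈ F' := hx
    have hS : γ2⁻¹ x ∈ S := hTx
    refine ⟨hS, ?_⟩
    have : x = γ2 (γ2⁻¹ x) := (γ2.apply_inv_self x).symm
    rw [this]
    by_cases hf' : γ2⁻¹ x ∈ F'
    · rw [hγ2F' _ hf']; exact Set.mem_union_left _ hf'
    · have hE : γ2⁻¹ x ∈ E1 := Set.mem_union_left _ ⟨hS, hf'⟩
      rw [hγ2 _ (Set.mem_union_right _ hE), if_neg hf']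
      exact Set.mem_union_right _ (he2'B _ hE)
  have hPF : Disjoint P F := by
    rw [Set.disjoint_left]
    intro x hx hxF
    rcases (hPim x hx).2 with h | h
    · exact Set.disjoint_left.mp hdisj hxF h
    · exact Set.disjoint_left.mp hCF2 (hBsub h) hxF
  set D3 := F ∪ P with hD3def
  have hbij3 : Set.BijOn (fun x => if x ∈ F then x else T x) D3 (F ∪ F') := by
    refine ⟨?_, ?_, ?_⟩
    · rintro x (hx | hx)
      · simp only [if_pos hx]; exact Set.mem_union_left _ hx
      · simp only [if_neg (Set.disjoint_left.mp hPF hx)]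
        exact Set.mem_union_right _ hx
    · rintro x (hx | hx) y (hy | hy) hxy
      · simpa only [if_pos hx, if_pos hy] using hxy
      · exfalso
        simp only [if_pos hx, if_neg (Set.disjoint_left.mp hPF hy)] at hxy
        rw [hxy] at hx
        exact Set.disjoint_left.mp hdisj hx hy
      · exfalso
        simp only [if_pos hy, if_neg (Set.disjoint_left.mp hPF hx)] at hxy
        rw [← hxy] at hy
        exact Set.disjoint_left.mp hdisj hy hx
      · simp only [if_neg (Set.disjoint_left.mp hPF hx),
          if_neg (Set.disjoint_left.mp hPF hy)] at hxy
        exact T.injective hxy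
    · rintro y (hy | hy)
      · exact ⟨y, Set.mem_union_left _ hy, by simp [if_pos hy]⟩
      · refine ⟨T⁻¹ y, ?_, ?_⟩
        · have : T⁻¹ y ∈ P := by
            simp only [hPdef, Set.mem_preimage, T.apply_inv_self]; exact hy
          exact Set.mem_union_right _ this
        · have hP : T⁻¹ y ∈ P := by
            simp only [hPdef, Set.mem_preimage, T.apply_inv_self]; exact hy
          simp only [if_neg (Set.disjoint_left.mp hPF hP), T.apply_inv_self]
  have hD3c : (D3ᶜ).Infinite := by
    have himg : (⇑γ2 '' W1).Infinite := hW1inf.image (γ2.injective.injOn)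
    apply himg.mono
    rintro x ⟨w, hw, rfl⟩
    have hwE1 : w ∈ E1 := Set.mem_union_right _ hw
    have hγ2w : γ2 w ∈ B := by
      rw [hγ2 _ (Set.mem_union_right _ hwE1), if_neg (hE1F' _ hwE1)]
      exact he2'B _ hwE1
    rintro (h | h)
    · exact Set.disjoint_left.mp hCF2 (hBsub hγ2w) h
    · have : γ2⁻¹ (γ2 w) ∈ S := (hPim _ h).1
      rw [γ2.inv_apply_self] at this
      exact hW1S w hw this
  have hR3c : ((F ∪ F')ᶜ).Infinite := hC
  obtain ⟨h, hh⟩ := exists_extension hbij3 hD3c hR3c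
  have hhF : ∀ x ∈ F, h x = x := fun x hx => by
    rw [hh x (Set.mem_union_left _ hx), if_pos hx]
  have hhmem : h ∈ H := h1 h hhF
  have hγ1F' : ∀ y ∈ F', (T * h⁻¹) y = y := by
    intro y hy
    have hP : T⁻¹ y ∈ P := by
      simp only [hPdef, Set.mem_preimage, T.apply_inv_self]; exact hy
    have hval : h (T⁻¹ y) = y := by
      rw [hh _ (Set.mem_union_right _ hP), if_neg (Set.disjoint_left.mp hPF hP),
        T.apply_inv_self]
    have hinv : h⁻¹ y = T⁻¹ y := h.injective (by rw [h.apply_inv_self, hval])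
    show T (h⁻¹ y) = y
    rw [hinv, T.apply_inv_self]
  have hγ1mem : (T * h⁻¹) ∈ H := h2 _ hγ1F'
  have : f = (T * h⁻¹) * h * γ2 := by
    rw [hTdef]; group
  rw [this]
  exact H.mul_mem (H.mul_mem hγ1mem hhmem) hγ2mem

lemma gen {F F' : Set ℕ} (hdisj : Disjoint F F') (hC : ((F ∪ F')ᶜ).Infinite)
    (H : Subgroup (Equiv.Perm ℕ))
    (h1 : ∀ f : Equiv.Perm ℕ, (∀ x ∈ F, f x = x) → f ∈ H)
    (h2 : ∀ f : Equiv.Perm ℕ, (∀ x ∈ F', f x = x) → f ∈ H)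
    (f : Equiv.Perm ℕ) : f ∈ H := by
  classical
  by_cases hg : ((((F ∪ F')ᶜ) ∪ F) \ (⇑f ⁻¹' F')).Infinite
  · exact gen_aux hdisj hC H h1 h2 f hg
  · have hC' : ((F' ∪ F)ᶜ).Infinite := by rwa [Set.union_comm]
    apply gen_aux hdisj.symm hC' H h2 h1 f
    have hfin : ((((F ∪ F')ᶜ) ∪ F) \ (⇑f ⁻¹' F')).Finite := Set.not_infinite.mp hg
    have hfin2 : (((F ∪ F')ᶜ) \ (⇑f ⁻¹' F')).Finite :=
      hfin.subset (fun x ⟨h1', h2'⟩ => ⟨Set.mem_union_left _ h1', h2'⟩)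
    have hinf : (((F ∪ F')ᶜ) \ (⇑f ⁻¹' F)).Infinite := by
      by_contra hcon
      have hfin3 := Set.not_infinite.mp hcon
      apply hC
      apply Set.Finite.subset (hfin2.union hfin3)
      intro x hx
      by_cases hxF : f x ∈ F
      · exact Set.mem_union_left _ ⟨hx, fun hs => Set.disjoint_left.mp hdisj hxF hs⟩
      · exact Set.mem_union_right _ ⟨hx, hxF⟩
    apply hinf.mono
    intro x hx
    rw [Set.union_comm F' F]
    exact ⟨Set.mem_union_left _ hx.1, hx.2⟩


lemma greedy (φ : Equiv.Perm ℕ) (hfin : {x | φ x = x}.Finite) :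
    ∃ M : Set ℕ, M.Infinite ∧ (∀ x ∈ M, φ x ∉ M) ∧ ((M ∪ ⇑φ '' M)ᶜ).Infinite := by
  classical
  set step := fun l : List ℕ =>
    sInf {x | φ x ≠ x ∧ ∀ y ∈ l, x ≠ y ∧ x ≠ φ y ∧ x ≠ φ⁻¹ y} with hstepdef
  have hstep : ∀ l : List ℕ,
      {x | φ x ≠ x ∧ ∀ y ∈ l, x ≠ y ∧ x ≠ φ y ∧ x ≠ φ⁻¹ y}.Infinite := by
    intro l
    have hbad : ({x | φ x = x} ∪ ⋃ y ∈ l, ({y, φ y, φ⁻¹ y} : Set ℕ)).Finite := by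
      refine hfin.union (Set.Finite.biUnion l.finite_toSet (fun y _ => ?_))
      exact ((Set.finite_singleton _).insert _).insert _
    apply Set.Infinite.mono _ hbad.infinite_compl
    intro x hx
    simp only [Set.mem_compl_iff, Set.mem_union, Set.mem_setOf_eq, Set.mem_iUnion,
      not_or, not_exists] at hx
    obtain ⟨hx1, hx2⟩ := hx
    refine ⟨hx1, fun y hy => ?_⟩
    have := hx2 y
    simp only [Set.mem_insert_iff, Set.mem_singleton_iff, not_or] at this
    have h3 := this hy
    exact ⟨h3.1, h3.2.1, h3.2.2⟩
  have hne : ∀ l : List ℕ,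
      {x | φ x ≠ x ∧ ∀ y ∈ l, x ≠ y ∧ x ≠ φ y ∧ x ≠ φ⁻¹ y}.Nonempty :=
    fun l => (hstep l).nonempty
  set seq : ℕ → List ℕ := fun n => Nat.rec [] (fun _ ih => step ih :: ih) n with hseqdef
  have hseqS : ∀ n, seq (n + 1) = step (seq n) :: seq n := fun n => rfl
  set a : ℕ → ℕ := fun n => step (seq n) with hadef
  have ha : ∀ n, φ (a n) ≠ a n ∧
      ∀ y ∈ seq n, a n ≠ y ∧ a n ≠ φ y ∧ a n ≠ φ⁻¹ y :=
    fun n => Nat.sInf_mem (hne (seq n))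
  have hmemseq : ∀ m n, m < n → a m ∈ seq n := by
    intro m n
    induction n with
    | zero => omega
    | succ k ih =>
      intro h
      rw [hseqS]
      rcases Nat.lt_succ_iff_lt_or_eq.mp h with h' | h'
      · exact List.mem_cons_of_mem _ (ih h')
      · subst h'; exact List.mem_cons_self
  have havoid : ∀ m n, m < n → a n ≠ a m ∧ a n ≠ φ (a m) ∧ a n ≠ φ⁻¹ (a m) :=
    fun m n h => (ha n).2 (a m) (hmemseq m n h)
  have hainj : ∀ m n, a m = a n → m = n := by
    intro m n hmn
    by_contra hne'
    rcases Nat.lt_or_ge m n with h | h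
    · have : m < n ∨ m = n := Or.inl h
      rcases this with h' | h'
      · exact (havoid m n h').1 hmn.symm
      · exact hne' h'
    · have : n < m := by omega
      exact (havoid n m this).1 hmn
  -- cross facts
  have hcross : ∀ m n, φ (a m) ≠ a n := by
    intro m n
    rcases Nat.lt_trichotomy m n with h | h | h
    · exact fun he => (havoid m n h).2.1 he.symm
    · subst h; exact (ha m).1
    · intro he
      have : a m = φ⁻¹ (a n) := by
        rw [← he, Equiv.Perm.inv_apply_self]
      exact (havoid n m h).2.2 this
  refine ⟨Set.range (fun k => a (2 * k)), ?_, ?_, ?_⟩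
  · exact Set.infinite_range_of_injective (fun x y hxy => by
      have hxy' : a (2 * x) = a (2 * y) := hxy
      have := hainj (2 * x) (2 * y) hxy'; omega)
  · rintro x ⟨k, rfl⟩ ⟨j, hj⟩
    exact hcross (2 * k) (2 * j) (by simpa using hj.symm)
  · apply Set.Infinite.mono (s := Set.range (fun k => a (2 * k + 1)))
    · rintro x ⟨k, rfl⟩
      simp only [Set.mem_compl_iff, Set.mem_union, not_or]
      constructor
      · rintro ⟨j, hj⟩
        have hj' : a (2 * j) = a (2 * k + 1) := hj
        have := hainj (2 * j) (2 * k + 1) hj'; omega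
      · rintro ⟨y, ⟨j, rfl⟩, hy⟩
        exact hcross (2 * j) (2 * k + 1) (by simpa using hy)
    · exact Set.infinite_range_of_injective (fun x y hxy => by
        have hxy' : a (2 * x + 1) = a (2 * y + 1) := hxy
        have := hainj (2 * x + 1) (2 * y + 1) hxy'; omega)

lemma split_perm (φ : Equiv.Perm ℕ) :
    ∃ φ1 φ2 : Equiv.Perm ℕ, φ = φ1 * φ2 ∧
      {x | φ1 x = x}.Infinite ∧ {x | φ2 x = x}.Infinite := by
  classical
  by_cases hfix : {x | φ x = x}.Infinite
  · refine ⟨φ, 1, by simp, hfix, ?_⟩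
    have huniv : {x : ℕ | (1 : Equiv.Perm ℕ) x = x} = Set.univ := by
      ext x; simp
    rw [huniv]; exact Set.infinite_univ
  · have hfin : {x | φ x = x}.Finite := Set.not_infinite.mp hfix
    obtain ⟨M, hMinf, hMdisj, hRinf⟩ := greedy φ hfin
    obtain ⟨N', hN'sub, hN'inf, -⟩ := split_infinite _ hRinf
    have hN'M : ∀ x ∈ N', x ∉ M := fun x hx hm =>
      (hN'sub hx) (Set.mem_union_left _ hm)
    have hN'φM : ∀ x ∈ N', x ∉ ⇑φ '' M := fun x hx hm =>
      (hN'sub hx) (Set.mem_union_right _ hm)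
    have hφMM : ∀ y ∈ ⇑φ '' M, y ∉ M := by
      rintro y ⟨m, hm, rfl⟩
      exact hMdisj m hm
    have hbij : Set.BijOn (fun x => if x ∈ M then φ x else x)
        (M ∪ N') ((⇑φ '' M) ∪ N') := by
      refine ⟨?_, ?_, ?_⟩
      · rintro x (hx | hx)
        · simp only [if_pos hx]; exact Set.mem_union_left _ ⟨x, hx, rfl⟩
        · simp only [if_neg (hN'M x hx)]; exact Set.mem_union_right _ hx
      · rintro x (hx | hx) y (hy | hy) hxy
        · simp only [if_pos hx, if_pos hy] at hxy
          exact φ.injective hxy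
        · exfalso
          simp only [if_pos hx, if_neg (hN'M y hy)] at hxy
          exact hN'φM y hy ⟨x, hx, hxy⟩
        · exfalso
          simp only [if_pos hy, if_neg (hN'M x hx)] at hxy
          exact hN'φM x hx ⟨y, hy, hxy.symm⟩
        · simpa only [if_neg (hN'M x hx), if_neg (hN'M y hy)] using hxy
      · rintro y (⟨m, hm, rfl⟩ | hy)
        · exact ⟨m, Set.mem_union_left _ hm, by simp [if_pos hm]⟩
        · exact ⟨y, Set.mem_union_right _ hy, by simp [if_neg (hN'M y hy)]⟩
    have hDc : ((M ∪ N')ᶜ).Infinite := by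
      apply Set.Infinite.mono (s := ⇑φ '' M)
      · rintro y ⟨m, hm, rfl⟩
        rintro (h | h)
        · exact hMdisj m hm h
        · exact hN'φM _ h ⟨m, hm, rfl⟩
      · exact hMinf.image (φ.injective.injOn)
    have hRc : (((⇑φ '' M) ∪ N')ᶜ).Infinite := by
      apply Set.Infinite.mono (s := M)
      · intro m hm
        rintro (h | h)
        · exact hφMM _ h hm
        · exact hN'M _ h hm
      · exact hMinf
    obtain ⟨φ2, hφ2⟩ := exists_extension hbij hDc hRc
    refine ⟨φ * φ2⁻¹, φ2, by group, ?_, ?_⟩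
    · apply Set.Infinite.mono (s := ⇑φ '' M) _ (hMinf.image (φ.injective.injOn))
      rintro y ⟨m, hm, rfl⟩
      have h2 : φ2 m = φ m := by
        rw [hφ2 m (Set.mem_union_left _ hm), if_pos hm]
      have : φ2⁻¹ (φ m) = m := by
        rw [← h2, Equiv.Perm.inv_apply_self]
      simp only [Set.mem_setOf_eq, Equiv.Perm.mul_apply, this]
    · apply Set.Infinite.mono (s := N') _ hN'inf
      intro x hx
      have : φ2 x = x := by
        rw [hφ2 x (Set.mem_union_right _ hx), if_neg (hN'M x hx)]
      exact this


noncomputable def q : ℕ ⊕ ℕ ≃ ℕ := Equiv.natSumNatEquivNat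

noncomputable def xe : ℕ × ℤ ≃ ℕ := Denumerable.eqv (ℕ × ℤ)

noncomputable def s0 : Equiv.Perm ℕ := q.permCongr (Equiv.sumComm ℕ ℕ)

lemma permCongr_mul {α β : Type*} (e : α ≃ β) (p r : Equiv.Perm α) :
    e.permCongr p * e.permCongr r = e.permCongr (p * r) := by
  ext x
  simp [Equiv.permCongr_apply, Equiv.Perm.mul_apply]

lemma permCongr_inv {α β : Type*} (e : α ≃ β) (p : Equiv.Perm α) :
    (e.permCongr p)⁻¹ = e.permCongr p⁻¹ := by
  have h : e.permCongr p * e.permCongr p⁻¹ = 1 := by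
    rw [permCongr_mul]
    ext x
    simp [Equiv.permCongr_apply]
  exact inv_eq_of_mul_eq_one_right h

lemma sumCongr_perm_mul (f g f' g' : Equiv.Perm ℕ) :
    Equiv.sumCongr f g * Equiv.sumCongr f' g' = Equiv.sumCongr (f * f') (g * g') := by
  ext z
  rcases z with m | m <;> simp [Equiv.Perm.mul_apply]

lemma sumCongr_perm_inv (f g : Equiv.Perm ℕ) :
    (Equiv.sumCongr f g)⁻¹ = Equiv.sumCongr f⁻¹ g⁻¹ := by
  have h : Equiv.sumCongr f g * Equiv.sumCongr f⁻¹ g⁻¹ = 1 := by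
    rw [sumCongr_perm_mul]
    simp
  exact inv_eq_of_mul_eq_one_right h

lemma lift_comm_eq (a : Equiv.Perm ℕ) :
    (q.permCongr (Equiv.sumCongr a (1 : Equiv.Perm ℕ))) * s0 *
      (q.permCongr (Equiv.sumCongr a 1))⁻¹ * s0⁻¹ =
      q.permCongr (Equiv.sumCongr a a⁻¹) := by
  rw [s0, permCongr_inv, permCongr_inv, permCongr_mul, permCongr_mul, permCongr_mul]
  congr 1
  ext z
  rcases z with m | m <;>
    simp [Equiv.Perm.mul_apply, sumCongr_perm_inv, Equiv.Perm.inv_def, Equiv.Perm.one_symm]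

lemma N_mul_eq (a b : Equiv.Perm ℕ) :
    q.permCongr (Equiv.sumCongr a a⁻¹) * q.permCongr (Equiv.sumCongr b b⁻¹) *
      q.permCongr (Equiv.sumCongr (b * a)⁻¹ ((b * a)⁻¹)⁻¹) =
      q.permCongr (Equiv.sumCongr (a * b * a⁻¹ * b⁻¹) (1 : Equiv.Perm ℕ)) := by
  rw [permCongr_mul, permCongr_mul, sumCongr_perm_mul, sumCongr_perm_mul]
  have e1 : a * b * (b * a)⁻¹ = a * b * a⁻¹ * b⁻¹ := by group
  have e2 : a⁻¹ * b⁻¹ * ((b * a)⁻¹)⁻¹ = 1 := by group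
  rw [e1, e2]

noncomputable def upPerm (ψ : Equiv.Perm ℕ) : Equiv.Perm (ℕ × ℤ) where
  toFun z := if 0 ≤ z.2 then (ψ z.1, z.2) else z
  invFun z := if 0 ≤ z.2 then (ψ⁻¹ z.1, z.2) else z
  left_inv := by
    intro z
    by_cases h : 0 ≤ z.2 <;> simp [h]
  right_inv := by
    intro z
    by_cases h : 0 ≤ z.2 <;> simp [h]

noncomputable def shPerm : Equiv.Perm (ℕ × ℤ) where
  toFun z := (z.1, z.2 + 1)
  invFun z := (z.1, z.2 - 1)
  left_inv := by intro z; simp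
  right_inv := by intro z; simp

noncomputable def rowPerm (ψ : Equiv.Perm ℕ) : Equiv.Perm (ℕ × ℤ) where
  toFun z := if z.2 = 0 then (ψ z.1, z.2) else z
  invFun z := if z.2 = 0 then (ψ⁻¹ z.1, z.2) else z
  left_inv := by
    rintro ⟨m, k⟩
    by_cases h : k = 0 <;> simp [h]
  right_inv := by
    rintro ⟨m, k⟩
    by_cases h : k = 0 <;> simp [h]

lemma row_comm (ψ : Equiv.Perm ℕ) :
    upPerm ψ * shPerm * (upPerm ψ)⁻¹ * shPerm⁻¹ = rowPerm ψ := by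
  apply Equiv.ext
  rintro ⟨m, k⟩
  simp only [Equiv.Perm.mul_apply, Equiv.Perm.inv_def]
  show (upPerm ψ) ((shPerm) ((upPerm ψ).symm ((shPerm).symm (m, k)))) =
    (rowPerm ψ) (m, k)
  have hsh : (shPerm).symm (m, k) = (m, k - 1) := rfl
  rw [hsh]
  by_cases h0 : (0:ℤ) ≤ k - 1
  · have h1 : (upPerm ψ).symm (m, k - 1) = (ψ⁻¹ m, k - 1) := by
      show (if 0 ≤ k - 1 then (ψ⁻¹ m, k - 1) else (m, k - 1)) = _
      rw [if_pos h0]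
    rw [h1]
    have h2 : shPerm (ψ⁻¹ m, k - 1) = (ψ⁻¹ m, k) := by
      show ((ψ⁻¹ m : ℕ), k - 1 + 1) = _
      norm_num
    rw [h2]
    have h3 : (0:ℤ) ≤ k := by omega
    have h4 : ¬ (k = 0) := by omega
    show (if 0 ≤ k then (ψ (ψ⁻¹ m), k) else (ψ⁻¹ m, k)) = _
    rw [if_pos h3]
    have : (rowPerm ψ) (m, k) = (m, k) := by
      show (if k = 0 then (ψ m, k) else (m, k)) = _
      rw [if_neg h4]
    rw [this]
    simp
  · have h1 : (upPerm ψ).symm (m, k - 1) = (m, k - 1) := by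
      show (if 0 ≤ k - 1 then (ψ⁻¹ m, k - 1) else (m, k - 1)) = _
      rw [if_neg h0]
    rw [h1]
    have h2 : shPerm (m, k - 1) = (m, k) := by
      show ((m : ℕ), k - 1 + 1) = _
      norm_num
    rw [h2]
    by_cases hk : k = 0
    · subst hk
      show (if (0:ℤ) ≤ 0 then (ψ m, (0:ℤ)) else (m, 0)) = _
      rw [if_pos le_rfl]
      show _ = (if (0:ℤ) = 0 then (ψ m, (0:ℤ)) else (m, 0))
      rw [if_pos rfl]
    · have h3 : ¬ (0:ℤ) ≤ k := by omega
      show (if 0 ≤ k then (ψ m, k) else (m, k)) = _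
      rw [if_neg h3]
      show _ = (if k = 0 then (ψ m, k) else (m, k))
      rw [if_neg hk]

theorem core (K : Subgroup (Equiv.Perm ℕ))
    (hconj : ∀ r : Equiv.Perm ℕ, ∀ p ∈ K, r * p * r⁻¹ ∈ K)
    (hs0 : s0 ∈ K) : ∀ φ : Equiv.Perm ℕ, φ ∈ K := by
  classical
  have hs0inv : s0⁻¹ ∈ K := K.inv_mem hs0
  -- N elements
  have hN : ∀ a : Equiv.Perm ℕ, q.permCongr (Equiv.sumCongr a a⁻¹) ∈ K := by
    intro a
    rw [← lift_comm_eq a]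
    exact K.mul_mem (hconj _ _ hs0) hs0inv
  -- commutators supported on the left part
  have hM : ∀ a b : Equiv.Perm ℕ,
      q.permCongr (Equiv.sumCongr (a * b * a⁻¹ * b⁻¹) (1 : Equiv.Perm ℕ)) ∈ K := by
    intro a b
    rw [← N_mul_eq a b]
    exact K.mul_mem (K.mul_mem (hN a) (hN b)) (hN _)
  -- every permutation with infinite fixed set is in K
  have hCoInf : ∀ φ : Equiv.Perm ℕ, {x | φ x = x}.Infinite → φ ∈ K := by
    intro φ hfixinf
    obtain ⟨W1, hW1sub, hW1inf, hW2inf⟩ := split_infinite _ hfixinf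
    set Bb : Set ℕ := {x | φ x = x}ᶜ ∪ W1 with hBbdef
    have hBbsupp : ∀ x ∉ Bb, φ x = x := by
      intro x hx
      by_contra hne
      exact hx (Set.mem_union_left _ hne)
    have hBbinf : Bb.Infinite := hW1inf.mono Set.subset_union_right
    have hBbcinf : (Bbᶜ).Infinite := by
      apply hW2inf.mono
      rintro x ⟨hx1, hx2⟩
      rintro (h | h)
      · exact h hx1
      · exact hx2 h
    have hmemiff : ∀ x, x ∈ Bb ↔ φ x ∈ Bb := perm_mem_iff φ Bb hBbsupp
    set φB : Equiv.Perm ↥Bb := φ.subtypePerm (fun x => (hmemiff x).symm) with hφBdef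
    let eB : ↥Bb ≃ ℕ := eqnat _ hBbinf
    set ψ : Equiv.Perm ℕ := eB.permCongr φB with hψdef
    set A : Equiv.Perm ℕ := xe.permCongr (rowPerm ψ) with hAdef
    set w : Equiv.Perm ℕ := q.permCongr (Equiv.sumCongr A (1 : Equiv.Perm ℕ))
      with hwdef
    have hwK : w ∈ K := by
      have : A = (xe.permCongr (upPerm ψ)) * (xe.permCongr shPerm) *
          (xe.permCongr (upPerm ψ))⁻¹ * (xe.permCongr shPerm)⁻¹ := by
        rw [permCongr_inv, permCongr_inv, permCongr_mul, permCongr_mul, permCongr_mul,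
          hAdef, row_comm]
      rw [hwdef, this]
      exact hM _ _
    -- the sequences
    set u : ℕ → ℕ := fun m => q (Sum.inl (xe (m, 0))) with hudef
    set v : ℕ → ℕ := fun m => (eB.symm m : ℕ) with hvdef
    have huinj : Function.Injective u := by
      intro m m' h
      have := q.injective h
      have := Sum.inl.inj this
      have := xe.injective this
      exact (Prod.mk.injEq _ _ _ _ ▸ this).1
    have hvinj : Function.Injective v := by
      intro m m' h
      exact eB.symm.injective (Subtype.ext h)
    have hucinf : ((Set.range u)ᶜ).Infinite := by
      apply Set.Infinite.mono (s := Set.range (fun n => q (Sum.inr n)))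
      · rintro x ⟨n, rfl⟩ ⟨m, hm⟩
        exact absurd (q.injective hm) (by simp)
      · exact Set.infinite_range_of_injective
          (fun n n' h => Sum.inr.inj (q.injective h))
    have hrangev : Set.range v = Bb := by
      ext x
      constructor
      · rintro ⟨m, rfl⟩; exact (eB.symm m).2
      · intro hx; exact ⟨eB ⟨x, hx⟩, by simp [hvdef]⟩
    have hvcinf : ((Set.range v)ᶜ).Infinite := by rw [hrangev]; exact hBbcinf
    obtain ⟨χ, hχ⟩ := exists_extension_seq huinj hvinj hucinf hvcinf
    -- w fixes everything outside range u
    have hwfix : ∀ y, (y ∉ Set.range u) → w y = y := by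
      intro y hy
      obtain ⟨z, rfl⟩ := q.surjective y
      rcases z with t | n
      · obtain ⟨p, rfl⟩ := xe.surjective t
        obtain ⟨m, k⟩ := p
        by_cases hk : k = 0
        · exact absurd ⟨m, by rw [hudef, hk]⟩ hy
        · have : w (q (Sum.inl (xe (m, k)))) = q (Sum.inl (A (xe (m, k)))) := by
            simp [hwdef, Equiv.permCongr_apply]
          rw [this]
          have : A (xe (m, k)) = xe (m, k) := by
            rw [hAdef]
            simp only [Equiv.permCongr_apply, Equiv.symm_apply_apply]
            have : (rowPerm ψ) (m, k) = (m, k) := by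
              show (if k = 0 then (ψ m, k) else (m, k)) = _
              rw [if_neg hk]
            rw [this]
          rw [this]
      · simp [hwdef, Equiv.permCongr_apply]
    -- w on range u
    have hwu : ∀ m, w (u m) = u (ψ m) := by
      intro m
      have h1 : w (q (Sum.inl (xe (m, 0)))) = q (Sum.inl (A (xe (m, 0)))) := by
        simp [hwdef, Equiv.permCongr_apply]
      have h2 : A (xe (m, 0)) = xe (ψ m, 0) := by
        rw [hAdef]
        simp only [Equiv.permCongr_apply, Equiv.symm_apply_apply]
        have : (rowPerm ψ) (m, 0) = (ψ m, 0) := by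
          show (if (0:ℤ) = 0 then (ψ m, (0:ℤ)) else (m, 0)) = _
          rw [if_pos rfl]
        rw [this]
      rw [hudef]
      simp only
      rw [h1, h2]
    -- the conjugation identity
    have hkey : φ = χ * w * χ⁻¹ := by
      ext x
      simp only [Equiv.Perm.mul_apply]
      by_cases hx : x ∈ Bb
      · have hxv : x = v (eB ⟨x, hx⟩) := by simp [hvdef]
        have hchiinv : χ⁻¹ x = u (eB ⟨x, hx⟩) := by
          apply χ.injective
          rw [Equiv.Perm.apply_inv_self, hχ, ← hxv]
        rw [hchiinv, hwu, hχ]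
        rw [hvdef]
        simp only
        have : ψ (eB ⟨x, hx⟩) = eB (φB ⟨x, hx⟩) := by
          rw [hψdef]; simp [Equiv.permCongr_apply]
        rw [this]
        simp only [Equiv.symm_apply_apply]
        rfl
      · have hfix : φ x = x := hBbsupp x hx
        have hchiinv : χ⁻¹ x ∉ Set.range u := by
          rintro ⟨m, hm⟩
          have : x = χ (u m) := by rw [hm, Equiv.Perm.apply_inv_self]
          rw [hχ] at this
          rw [this] at hx
          exact hx (hrangev ▸ Set.mem_range_self m)
        rw [hwfix _ hchiinv, Equiv.Perm.apply_inv_self, hfix]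
    rw [hkey]
    exact hconj χ w hwK
  -- final: split arbitrary permutation
  intro φ
  obtain ⟨φ1, φ2, heq, h1, h2⟩ := split_perm φ
  rw [heq]
  exact K.mul_mem (hCoInf φ1 h1) (hCoInf φ2 h2)


theorem part1 (lam : Cardinal)
    (G : Ordinal → Subgroup (Equiv.Perm ℕ))
    (hchain : ∀ i j : Ordinal, i ≤ j → G i ≤ G j)
    (hproper : ∀ i < lam.ord, G i ≠ ⊤)
    (hcover : ∀ g : Equiv.Perm ℕ, ∃ i < lam.ord, g ∈ G i) :
    (∀ X : Set ℕ, X.Infinite → ∀ i < lam.ord,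
      ¬ (∀ σ : Equiv.Perm ↥X, ∃ g ∈ G i, ⇑g '' X = X ∧ ∀ x : ↥X, g ↑x = ↑(σ x))) := by
  classical
  intro X hX i hi hInd
  set E : Set ℕ := Xᶜ with hEdef
  let ε : ↥X ≃ ℕ := eqnat X hX
  -- the special involution supported on X
  set uElt : Equiv.Perm ℕ := s0.extendDomain ε.symm with huElt
  obtain ⟨au, haul, hauG⟩ := hcover uElt
  -- the swap element t
  set embFn : ℕ → ℕ := fun x => ((ε.symm (q (Sum.inr x)) : ↥X) : ℕ) with hembdef
  have hembinj : Function.Injective embFn := by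
    intro x y hxy
    have h1 := ε.symm.injective (Subtype.ext hxy)
    have h2 := q.injective h1
    exact Sum.inr.inj h2
  have hembX : ∀ x, embFn x ∈ X := fun x => (ε.symm (q (Sum.inr x))).2
  set F' : Set ℕ := embFn '' E with hF'def
  have hF'X : F' ⊆ X := by rintro y ⟨x, -, rfl⟩; exact hembX x
  have hEF' : ∀ x, x ∈ E → x ∉ F' := fun x hx hx' => hx (hF'X hx')
  set tFun : ℕ → ℕ := fun x =>
    if x ∈ E then embFn x else if x ∈ F' then Function.invFun embFn x else x
    with htFundef
  have htinv : Function.Involutive tFun := by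
    intro x
    by_cases hx : x ∈ E
    · have h1 : tFun x = embFn x := by rw [htFundef]; simp [hx]
      rw [h1]
      have h2 : embFn x ∉ E := fun h => h (hembX x)
      have h3 : embFn x ∈ F' := ⟨x, hx, rfl⟩
      rw [htFundef]
      simp only [if_neg h2, if_pos h3]
      exact Function.leftInverse_invFun hembinj x
    · by_cases hx' : x ∈ F'
      · have h1 : tFun x = Function.invFun embFn x := by
          rw [htFundef]; simp [hx, hx']
        obtain ⟨y, hyE, hyx⟩ := hx'
        have h2 : Function.invFun embFn x = y := by
          rw [← hyx]; exact Function.leftInverse_invFun hembinj y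
        rw [h1, h2, htFundef]
        simp only [if_pos hyE]
        exact hyx
      · have h1 : tFun x = x := by rw [htFundef]; simp [hx, hx']
        rw [h1, h1]
  set t : Equiv.Perm ℕ := htinv.toPerm with htdef
  have htapp : ∀ x, t x = tFun x := fun x => rfl
  obtain ⟨at_, hatl, hatG⟩ := hcover t
  -- the common index
  set c : Ordinal := max i (max au at_) with hcdef
  have hclt : c < lam.ord := max_lt hi (max_lt haul hatl)
  have hic : G i ≤ G c := hchain _ _ (le_max_left _ _)
  have hauc : G au ≤ G c := hchain _ _ (le_trans (le_max_left _ _) (le_max_right _ _))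
  have hatc : G at_ ≤ G c := hchain _ _ (le_trans (le_max_right _ _) (le_max_right _ _))
  have htc : t ∈ G c := hatc hatG
  have huc : uElt ∈ G c := hauc hauG
  -- the subgroup K
  set K : Subgroup (Equiv.Perm ℕ) :=
    Subgroup.comap (Equiv.Perm.extendDomainHom ε.symm) (G c) with hKdef
  have hmemK : ∀ p : Equiv.Perm ℕ, p ∈ K ↔ p.extendDomain ε.symm ∈ G c := by
    intro p; rw [hKdef, Subgroup.mem_comap]; rfl
  -- applying extendDomain
  have hED : ∀ (e : Equiv.Perm ℕ) (x : ℕ) (hx : x ∈ X),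
      e.extendDomain ε.symm x = ((ε.symm (e (ε ⟨x, hx⟩)) : ↥X) : ℕ) := by
    intro e x hx
    have h1 : x = ((ε.symm (ε ⟨x, hx⟩) : ↥X) : ℕ) := by simp
    conv_lhs => rw [h1]
    rw [Equiv.Perm.extendDomain_apply_image]
  have hEDout : ∀ (e : Equiv.Perm ℕ) (x : ℕ), x ∉ X → e.extendDomain ε.symm x = x := by
    intro e x hx
    exact Equiv.Perm.extendDomain_apply_not_subtype e ε.symm hx
  -- conjugation closure of K
  have hconj : ∀ r : Equiv.Perm ℕ, ∀ p ∈ K, r * p * r⁻¹ ∈ K := by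
    intro r p hp
    set ρ : Equiv.Perm ↥X := ε.symm.permCongr r with hρdef
    obtain ⟨g, hgG, hgX, hgσ⟩ := hInd ρ
    have hgiff : ∀ x, x ∈ X ↔ g x ∈ X := by
      intro x
      constructor
      · intro hx
        rw [← hgX]; exact ⟨x, hx, rfl⟩
      · intro hx
        rw [← hgX] at hx
        obtain ⟨y, hy, hyx⟩ := hx
        rwa [← g.injective hyx]
    have hkey : (r * p * r⁻¹).extendDomain ε.symm =
        g * (p.extendDomain ε.symm) * g⁻¹ := by
      apply Equiv.ext
      intro x
      by_cases hx : x ∈ X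
      · have hgix : g⁻¹ x ∈ X := by
          rw [hgiff (g⁻¹ x)]
          rw [Equiv.Perm.apply_inv_self]
          exact hx
        have hρinv : g⁻¹ x = ((ρ⁻¹ ⟨x, hx⟩ : ↥X) : ℕ) := by
          apply g.injective
          rw [Equiv.Perm.apply_inv_self]
          rw [hgσ (ρ⁻¹ ⟨x, hx⟩)]
          simp
        simp only [Equiv.Perm.mul_apply]
        rw [hED _ x hx]
        have step1 : (p.extendDomain ε.symm) (g⁻¹ x) =
            ((ε.symm (p (ε (ρ⁻¹ ⟨x, hx⟩))) : ↥X) : ℕ) := by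
          rw [hED _ _ (hρinv ▸ (ρ⁻¹ ⟨x, hx⟩).2)]
          congr 2
          apply congrArg
          apply congrArg
          apply Subtype.ext
          exact hρinv
        rw [step1]
        rw [hgσ (ε.symm (p (ε (ρ⁻¹ ⟨x, hx⟩))))]
        congr 1
        rw [hρdef]
        simp only [Equiv.permCongr_apply, Equiv.symm_symm, Equiv.Perm.mul_apply]
        rw [permCongr_inv]
        simp only [Equiv.permCongr_apply, Equiv.symm_symm]
        simp
      · have hgix : g⁻¹ x ∉ X := by
          intro h
          rw [hgiff (g⁻¹ x), Equiv.Perm.apply_inv_self] at h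
          exact hx h
        simp only [Equiv.Perm.mul_apply]
        rw [hEDout _ x hx, hEDout _ _ hgix, Equiv.Perm.apply_inv_self]
    rw [hmemK, hkey]
    exact (G c).mul_mem ((G c).mul_mem (hic hgG) ((hmemK p).mp hp)) ((G c).inv_mem (hic hgG))
  have hs0K : s0 ∈ K := (hmemK s0).mpr (huElt ▸ huc)
  have hall : ∀ p : Equiv.Perm ℕ, p ∈ K := core K hconj hs0K
  -- every permutation fixing E pointwise is in G c
  have hFixE : ∀ f : Equiv.Perm ℕ, (∀ x ∈ E, f x = x) → f ∈ G c := by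
    intro f hf
    have hf' : ∀ x ∉ X, f x = x := fun x hx => hf x hx
    have hiff : ∀ x, x ∈ X ↔ f x ∈ X := perm_mem_iff f X hf'
    set p : Equiv.Perm ℕ := ε.permCongr (f.subtypePerm (fun x => (hiff x).symm)) with hpdef
    have : p.extendDomain ε.symm = f := by
      apply Equiv.ext
      intro x
      by_cases hx : x ∈ X
      · rw [hED _ x hx, hpdef]
        simp only [Equiv.permCongr_apply, Equiv.symm_apply_apply]
        rfl
      · rw [hEDout _ x hx, hf' x hx]
    rw [← this]
    exact (hmemK p).mp (hall p)
  -- every permutation fixing F' pointwise is in G c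
  have hFixF' : ∀ f : Equiv.Perm ℕ, (∀ x ∈ F', f x = x) → f ∈ G c := by
    intro f hf
    have h1 : ∀ x ∈ E, (t⁻¹ * f * t) x = x := by
      intro x hx
      simp only [Equiv.Perm.mul_apply]
      have ht1 : t x = embFn x := by rw [htapp, htFundef]; simp [hx]
      rw [ht1, hf _ ⟨x, hx, rfl⟩, ← ht1, Equiv.Perm.inv_apply_self]
    have h2 : (t⁻¹ * f * t) ∈ G c := hFixE _ h1
    have h3 : f = t * (t⁻¹ * f * t) * t⁻¹ := by group
    rw [h3]
    exact (G c).mul_mem ((G c).mul_mem htc h2) ((G c).inv_mem htc)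
  -- generation: G c is everything
  have hEF'disj : Disjoint E F' := by
    rw [Set.disjoint_left]
    exact fun x hx hx' => hEF' x hx hx'
  have hCinf : ((E ∪ F')ᶜ).Infinite := by
    apply Set.Infinite.mono (s := Set.range (fun n => ((ε.symm (q (Sum.inl n)) : ↥X) : ℕ)))
    · rintro x ⟨n, rfl⟩
      simp only [Set.mem_compl_iff, Set.mem_union, not_or]
      constructor
      · intro h; exact h (ε.symm (q (Sum.inl n))).2
      · rintro ⟨y, -, hy⟩
        have h1 := ε.symm.injective (Subtype.ext hy)
        have h2 := q.injective h1
        simp at h2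
    · apply Set.infinite_range_of_injective
      intro n n' h
      have h1 := ε.symm.injective (Subtype.ext h)
      exact Sum.inl.inj (q.injective h1)
  have htop : ∀ f : Equiv.Perm ℕ, f ∈ G c := fun f =>
    gen hEF'disj hCinf (G c) hFixE hFixF' f
  exact hproper c hclt ((Subgroup.eq_top_iff' (G c)).mpr htop)

theorem part2 (lam : Cardinal)
    (G : Ordinal → Subgroup (Equiv.Perm ℕ))
    (hcover : ∀ g : Equiv.Perm ℕ, ∃ i < lam.ord, g ∈ G i) :
    (∀ Xp : ℕ → Set ℕ, (∀ n, (Xp n).Infinite) →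
      (∀ m n, m ≠ n → Disjoint (Xp m) (Xp n)) → (⋃ n, Xp n) = Set.univ →
      ∀ idx : ℕ → Ordinal, (∀ n, idx n < lam.ord) →
      ∀ pi : ℕ → Equiv.Perm ℕ,
        (∀ n, ∀ x ∈ Xp n, pi n x ∈ Xp n) →
        (∀ n, ∀ x ∉ Xp n, pi n x = x) →
        (∀ n, ∀ g ∈ G (idx n), ∃ x ∈ Xp n, g x ≠ pi n x) →
        ∃ π : Equiv.Perm ℕ, (∀ n, ∀ x ∈ Xp n, π x = pi n x) ∧
          ∀ n, π ∉ G (idx n)) := by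
  classical
  intro Xp hinf hdisj hcov idx hidx pi hmem hout hdiag
  have hex : ∀ x : ℕ, ∃ n, x ∈ Xp n := by
    intro x
    have : x ∈ ⋃ n, Xp n := by rw [hcov]; trivial
    exact Set.mem_iUnion.mp this
  choose N hN using hex
  have huniq : ∀ x n, x ∈ Xp n → N x = n := by
    intro x n h
    by_contra hne
    exact Set.disjoint_left.mp (hdisj _ _ hne) (hN x) h
  have hmemiff : ∀ n x, x ∈ Xp n ↔ pi n x ∈ Xp n := fun n =>
    perm_mem_iff (pi n) (Xp n) (hout n)
  set F : ℕ → ℕ := fun x => pi (N x) x with hF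
  set Gi : ℕ → ℕ := fun x => (pi (N x))⁻¹ x with hGi
  have hleft : ∀ x, Gi (F x) = x := by
    intro x
    have h1 : F x ∈ Xp (N x) := hmem _ _ (hN x)
    have h2 : N (F x) = N x := huniq _ _ h1
    rw [hGi]
    simp only
    rw [h2, hF]
    simp only
    exact Equiv.Perm.inv_apply_self _ _
  have hright : ∀ x, F (Gi x) = x := by
    intro x
    have h1 : (pi (N x))⁻¹ x ∈ Xp (N x) := by
      rw [hmemiff (N x) _]
      rw [Equiv.Perm.apply_inv_self]
      exact hN x
    have h2 : N ((pi (N x))⁻¹ x) = N x := huniq _ _ h1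
    rw [hF, hGi]
    simp only
    rw [h2]
    exact Equiv.Perm.apply_inv_self _ _
  set π : Equiv.Perm ℕ := ⟨F, Gi, hleft, hright⟩ with hπ
  have hπapp : ∀ n, ∀ x ∈ Xp n, π x = pi n x := by
    intro n x hx
    have : π x = pi (N x) x := rfl
    rw [this, huniq x n hx]
  refine ⟨π, hπapp, ?_⟩
  intro n hmem'
  obtain ⟨x, hxX, hneq⟩ := hdiag n π hmem'
  exact hneq (hπapp n x hxX)


end MN

end

/-- Macpherson–Neumann style lemma: if `S = Sym(ω)` is the union of a chain of
proper subgroups `G i`, `i < λ`, then no `G i` induces the full symmetric group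
on any infinite `X ⊆ ω`; consequently, given a partition of `ω` into infinite
sets `Xp n` and permutations `pi n` of `Xp n` avoiding all restrictions of
elements of `G (idx n)`, the union permutation `π` avoids every `G (idx n)`. -/
theorem stmt_1 (lam : Cardinal)
    (G : Ordinal → Subgroup (Equiv.Perm ℕ))
    (hchain : ∀ i j : Ordinal, i ≤ j → G i ≤ G j)
    (hproper : ∀ i < lam.ord, G i ≠ ⊤)
    (hcover : ∀ g : Equiv.Perm ℕ, ∃ i < lam.ord, g ∈ G i) :
    (∀ X : Set ℕ, X.Infinite → ∀ i < lam.ord,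
      ¬ (∀ σ : Equiv.Perm ↥X, ∃ g ∈ G i, ⇑g '' X = X ∧ ∀ x : ↥X, g ↑x = ↑(σ x))) ∧
    (∀ Xp : ℕ → Set ℕ, (∀ n, (Xp n).Infinite) →
      (∀ m n, m ≠ n → Disjoint (Xp m) (Xp n)) → (⋃ n, Xp n) = Set.univ →
      ∀ idx : ℕ → Ordinal, (∀ n, idx n < lam.ord) →
      ∀ pi : ℕ → Equiv.Perm ℕ,
        (∀ n, ∀ x ∈ Xp n, pi n x ∈ Xp n) →
        (∀ n, ∀ x ∉ Xp n, pi n x = x) →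
        (∀ n, ∀ g ∈ G (idx n), ∃ x ∈ Xp n, g x ≠ pi n x) →
        ∃ π : Equiv.Perm ℕ, (∀ n, ∀ x ∈ Xp n, π x = pi n x) ∧
          ∀ n, π ∉ G (idx n)) := by
  constructor
  · exact MN.part1 lam G hchain hproper hcover
  · exact MN.part2 lam G hcover
end

section
/- Let ω = Ω₁ ∪ Ω₂ be a partition of ω into two infinite sets, and let H = {g ∈ Sym(ω) : |g[Ω₁] △ Ω_i| < ℵ₀ for some i ∈ {1,2}}. Then H is a maximal proper subgroup of Sym(ω): H ≠ Sym(ω), and any subgroup of Sym(ω) properly containing H equals Sym(ω). -/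
/-!
Write `Ω = Ω₁`, so that `Ω₂ = Ωᶜ` and `H` contains the setwise stabilizer of `Ω`. Call `A` and `B`
independent when `A ∩ B`, `A \ B`, `B \ A` and `(A ∪ B)ᶜ` are all infinite; `Sym(ω)` acts
transitively on independent pairs. A permutation `g` with `g Ω` independent of `Ω` is not in `H`.

Let `K > H`. As `K` contains the stabilizer of `Ω`, whether `g ∈ K` depends only on `g Ω`, so
once `K` contains one `t` with `t Ω` independent of `Ω` it contains every such `g`; and every
permutation `g` is a product `v (v⁻¹ g)` of two of them, where `v Ω = M` and `v M = g Ω` for a set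
`M` independent of both `Ω` and `g Ω`. Such a `t` exists: for `k ∈ K \ H`, `Ω` splits `k Ω` or
its complement, and a permutation stabilizing `k Ω`, hence lying in `k Stab(Ω) k⁻¹ ≤ K`, can
re-cut `Ω` inside that set so as to make it independent of `Ω`.
-/

open Cardinal MulAction Set
open scoped Pointwise

variable {α : Type*}

theorem Equiv.Perm.exists_smul_eq_smul_eq {A B C D : Set α}
    (h₁ : #↥(A ∩ B) = #↥(C ∩ D)) (h₂ : #↥(A \ B) = #↥(C \ D))
    (h₃ : #↥(B \ A) = #↥(D \ C)) (h₄ : #↥(A ∪ B)ᶜ = #↥(C ∪ D)ᶜ) :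
    ∃ π : Perm α, π • A = C ∧ π • B = D := by
  let f : α → Prop × Prop := fun x => (x ∈ A, x ∈ B)
  let g : α → Prop × Prop := fun x => (x ∈ C, x ∈ D)
  have hfg : ∀ i, #{x // f x = i} = #{x // g x = i} := by
    rintro ⟨p, q⟩
    rcases Classical.propComplete p with rfl | rfl <;>
      rcases Classical.propComplete q with rfl | rfl
    · simpa [f, g, Set.Elem] using h₁
    · simpa [f, g, Set.Elem] using h₂
    · simpa [f, g, Set.Elem, and_comm] using h₃
    · simpa [f, g, Set.Elem] using h₄
  let e : ∀ i, {x // f x = i} ≃ {x // g x = i} := fun i => Classical.choice (Cardinal.eq.1 (hfg i))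
  let π : Perm α := ofFiberEquiv e
  have hπ : ∀ x, (π x ∈ C ↔ x ∈ A) ∧ (π x ∈ D ↔ x ∈ B) := fun x => by
    have h := ofFiberEquiv_map e x
    simp only [f, g, Prod.mk.injEq] at h
    exact ⟨Iff.of_eq h.1, Iff.of_eq h.2⟩
  refine ⟨π, ?_, ?_⟩ <;> ext y <;> obtain ⟨x, rfl⟩ := π.surjective y <;>
    rw [← Perm.smul_def, smul_mem_smul_set_iff, Perm.smul_def]
  exacts [(hπ x).1.symm, (hπ x).2.symm]

namespace Set

def Splits (M S : Set α) : Prop := (S ∩ M).Infinite ∧ (S \ M).Infinite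

def IsIndependent (A B : Set α) : Prop :=
  (A ∩ B).Infinite ∧ (A \ B).Infinite ∧ (B \ A).Infinite ∧ (A ∪ B)ᶜ.Infinite

theorem Splits.mono {M S T : Set α} (h : Splits M S) (hST : S ⊆ T) : Splits M T :=
  ⟨h.1.mono (inter_subset_inter_left M hST), h.2.mono (sdiff_subset_sdiff_left hST)⟩

theorem IsIndependent.symm {A B : Set α} (h : IsIndependent A B) : IsIndependent B A :=
  ⟨inter_comm A B ▸ h.1, h.2.2.1, h.2.1, union_comm A B ▸ h.2.2.2⟩

theorem isIndependent_of_splits {A M : Set α} (h : Splits M A) (hc : Splits M Aᶜ) :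
    IsIndependent A M := by
  refine ⟨h.1, h.2, ?_, ?_⟩
  · simpa only [sdiff_eq, inter_comm] using hc.1
  · simpa only [compl_union, sdiff_eq] using hc.2

theorem IsIndependent.infinite_symmDiff {A B : Set α} (h : IsIndependent A B) :
    (symmDiff B A).Infinite ∧ (symmDiff B Aᶜ).Infinite :=
  ⟨h.2.2.1.mono fun _ hx => Or.inl hx,
    h.1.mono fun _ hx => Or.inl ⟨hx.2, not_not.2 hx.1⟩⟩

theorem Infinite.exists_splits {S : Set α} (hS : S.Infinite) : ∃ T ⊆ S, Splits T S := by
  let φ : ℕ → α := fun n => hS.natEmbedding S n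
  have hφ : φ.Injective := Subtype.val_injective.comp (hS.natEmbedding S).injective
  have hφS : ∀ n, φ n ∈ S := fun n => (hS.natEmbedding S n).2
  refine ⟨range fun n => φ (2 * n), range_subset_iff.2 fun n => hφS _, ?_, ?_⟩
  · rw [inter_eq_right.2 (range_subset_iff.2 fun n => hφS _)]
    exact infinite_range_of_injective (hφ.comp fun m n h => by simpa using h)
  · refine (infinite_range_of_injective (f := fun n => φ (2 * n + 1))
      (hφ.comp fun m n h => by simpa using h)).mono ?_
    rintro _ ⟨n, rfl⟩
    refine ⟨hφS _, ?_⟩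
    rintro ⟨m, hm⟩
    have := hφ hm
    omega

theorem exists_splits_preimage {ι : Type*} [Finite ι] (f : α → ι) :
    ∃ M : Set α, ∀ I : Set ι, (f ⁻¹' I).Infinite → Splits M (f ⁻¹' I) := by
  have hfiber : ∀ i, ∃ T ⊆ f ⁻¹' {i}, (f ⁻¹' {i}).Infinite → Splits T (f ⁻¹' {i}) := by
    intro i
    by_cases hi : (f ⁻¹' {i}).Infinite
    · obtain ⟨T, hTi, hT⟩ := hi.exists_splits
      exact ⟨T, hTi, fun _ => hT⟩
    · exact ⟨∅, empty_subset _, fun h => absurd h hi⟩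
  choose T hTf hT using hfiber
  refine ⟨⋃ i, T i, fun I hI => ?_⟩
  obtain ⟨i, hiI, hi⟩ : ∃ i ∈ I, (f ⁻¹' {i}).Infinite := by
    by_contra! h
    refine hI ?_
    rw [← biUnion_preimage_singleton]
    exact (toFinite I).biUnion h
  have hpiece : f ⁻¹' {i} ∩ ⋃ j, T j = f ⁻¹' {i} ∩ T i := by
    refine Subset.antisymm ?_ fun x hx => ⟨hx.1, mem_iUnion.2 ⟨i, hx.2⟩⟩
    rintro x ⟨hxi, hxT⟩
    obtain ⟨j, hxj⟩ := mem_iUnion.1 hxT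
    have hji : j = i := (hTf j hxj).symm.trans hxi
    exact ⟨hxi, hji ▸ hxj⟩
  have hsplit : Splits (⋃ j, T j) (f ⁻¹' {i}) := by
    rw [Splits, ← sdiff_self_inter, hpiece, sdiff_self_inter]
    exact hT i hi
  exact hsplit.mono (preimage_mono (singleton_subset_iff.2 hiI))

theorem exists_isIndependent_isIndependent {A B : Set α} (hA : A.Infinite) (hAc : Aᶜ.Infinite)
    (hB : B.Infinite) (hBc : Bᶜ.Infinite) :
    ∃ M, IsIndependent A M ∧ IsIndependent M B := by
  obtain ⟨M, hM⟩ := exists_splits_preimage fun x => (x ∈ A, x ∈ B)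
  exact ⟨M, isIndependent_of_splits (hM {p | p.1} hA) (hM {p | ¬p.1} hAc),
    (isIndependent_of_splits (hM {p | p.2} hB) (hM {p | ¬p.2} hBc)).symm⟩

theorem splits_or_splits_compl {Ω B : Set α} (hΩ : Ω.Infinite) (hΩc : Ωᶜ.Infinite)
    (h₁ : (symmDiff B Ω).Infinite) (h₂ : (symmDiff B Ωᶜ).Infinite) :
    Splits Ω B ∨ Splits Ω Bᶜ := by
  by_contra! h
  simp only [Splits, not_and_or, not_infinite] at h
  obtain ⟨hB | hB, hBc | hBc⟩ := h
  · exact hΩ ((hB.union hBc).subset fun x hx => by by_cases x ∈ B <;> simp_all)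
  · exact h₂ ((hB.union hBc).subset fun x hx => by by_cases x ∈ B <;> simp_all [mem_symmDiff])
  · exact h₁ ((hB.union hBc).subset fun x hx => by by_cases x ∈ B <;> simp_all [mem_symmDiff])
  · exact hΩc ((hB.union hBc).subset fun x hx => by by_cases x ∈ B <;> simp_all)

variable [Countable α]

theorem Infinite.mk_eq_aleph0 {S : Set α} (hS : S.Infinite) : #S = ℵ₀ :=
  have := hS.to_subtype
  Cardinal.mk_eq_aleph0 S

theorem IsIndependent.exists_perm_smul_eq {A B C D : Set α} (hAB : IsIndependent A B)
    (hCD : IsIndependent C D) : ∃ π : Equiv.Perm α, π • A = C ∧ π • B = D :=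
  Equiv.Perm.exists_smul_eq_smul_eq
    (by rw [hAB.1.mk_eq_aleph0, hCD.1.mk_eq_aleph0])
    (by rw [hAB.2.1.mk_eq_aleph0, hCD.2.1.mk_eq_aleph0])
    (by rw [hAB.2.2.1.mk_eq_aleph0, hCD.2.2.1.mk_eq_aleph0])
    (by rw [hAB.2.2.2.mk_eq_aleph0, hCD.2.2.2.mk_eq_aleph0])

theorem Splits.exists_smul_eq_isIndependent {Ω S : Set α} (h : Splits Ω S) :
    ∃ τ : Equiv.Perm α, τ • S = S ∧ IsIndependent Ω (τ • Ω) := by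
  obtain ⟨M, hM⟩ := exists_splits_preimage fun x => (x ∈ S, x ∈ Ω)
  have hin : Splits M (S ∩ Ω) := hM {p | p.1 ∧ p.2} h.1
  have hout : Splits M (S \ Ω) := hM {p | p.1 ∧ ¬p.2} h.2
  -- `τ` replaces the trace `S ∩ Ω` by `S ∩ M`, which cuts both `S ∩ Ω` and `S \ Ω`.
  obtain ⟨τ, hτS, hτΩ⟩ : ∃ τ : Equiv.Perm α, τ • S = S ∧ τ • Ω = (S ∩ M) ∪ (Ω \ S) := by
    refine Equiv.Perm.exists_smul_eq_smul_eq ?_ ?_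
      (congrArg (fun s : Set α => #s) ?_) (congrArg (fun s : Set α => #s) ?_)
    · rw [h.1.mk_eq_aleph0, (hin.1.mono fun x hx => by simp_all).mk_eq_aleph0]
    · rw [h.2.mk_eq_aleph0, (hin.2.mono fun x hx => by simp_all).mk_eq_aleph0]
    all_goals
      ext x
      simp only [mem_sdiff, mem_union, mem_inter_iff, mem_compl_iff]
      tauto
  refine ⟨τ, hτS, hτΩ ▸ ⟨hin.1.mono ?_, hin.2.mono ?_, hout.1.mono ?_, hout.2.mono ?_⟩⟩ <;>
    intro x hx <;> simp_all

end Set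

namespace Equiv.Perm

variable {Ω : Set α} {K : Subgroup (Perm α)}

theorem mem_of_smul_eq_smul (hK : stabilizer (Perm α) Ω ≤ K) {u g : Perm α} (hu : u ∈ K)
    (h : g • Ω = u • Ω) : g ∈ K := by
  have hug : u⁻¹ * g ∈ K := hK (by rw [mem_stabilizer_iff, mul_smul, h, inv_smul_smul])
  simpa using K.mul_mem hu hug

theorem mem_of_mem_stabilizer_smul (hK : stabilizer (Perm α) Ω ≤ K) {u τ : Perm α} (hu : u ∈ K)
    (hτ : τ ∈ stabilizer (Perm α) (u • Ω)) : τ ∈ K := by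
  have hconj : u⁻¹ * τ * u ∈ K :=
    hK (by rw [mem_stabilizer_iff, mul_smul, mul_smul, mem_stabilizer_iff.1 hτ, inv_smul_smul])
  simpa [mul_assoc] using K.mul_mem (K.mul_mem hu hconj) (K.inv_mem hu)

variable [Countable α]

theorem exists_isIndependent_smul (hΩ : Ω.Infinite) (hΩc : Ωᶜ.Infinite) :
    ∃ g : Perm α, IsIndependent Ω (g • Ω) := by
  obtain ⟨M, hΩM, -⟩ := exists_isIndependent_isIndependent hΩ hΩc hΩ hΩc
  obtain ⟨g, hg, -⟩ := hΩM.exists_perm_smul_eq hΩM.symm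
  exact ⟨g, hg ▸ hΩM⟩

theorem mem_of_isIndependent (hK : stabilizer (Perm α) Ω ≤ K) {t g : Perm α} (ht : t ∈ K)
    (hΩt : IsIndependent Ω (t • Ω)) (hΩg : IsIndependent Ω (g • Ω)) : g ∈ K := by
  obtain ⟨π, hπΩ, hπt⟩ := hΩt.exists_perm_smul_eq hΩg
  exact mem_of_smul_eq_smul hK (K.mul_mem (hK hπΩ) ht) (by rw [mul_smul, hπt])

theorem eq_top_of_isIndependent (hK : stabilizer (Perm α) Ω ≤ K) {t : Perm α} (ht : t ∈ K)
    (hΩt : IsIndependent Ω (t • Ω)) (hΩ : Ω.Infinite) (hΩc : Ωᶜ.Infinite) : K = ⊤ := by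
  refine (Subgroup.eq_top_iff' K).2 fun g => ?_
  obtain ⟨M, hΩM, hMG⟩ := exists_isIndependent_isIndependent hΩ hΩc (hΩ.smul_set (a := g))
    (by rw [← smul_set_compl]; exact hΩc.smul_set)
  obtain ⟨v, hvΩ, hvM⟩ := hΩM.exists_perm_smul_eq hMG
  have hv : v ∈ K := mem_of_isIndependent hK ht hΩt (hvΩ ▸ hΩM)
  have hvg : v⁻¹ * g ∈ K :=
    mem_of_isIndependent hK ht hΩt (by rwa [mul_smul, ← hvM, inv_smul_smul])
  simpa using K.mul_mem hv hvg

theorem exists_mem_isIndependent (hK : stabilizer (Perm α) Ω ≤ K) {k : Perm α} (hk : k ∈ K)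
    (hΩ : Ω.Infinite) (hΩc : Ωᶜ.Infinite) (h₁ : (symmDiff (k • Ω) Ω).Infinite)
    (h₂ : (symmDiff (k • Ω) Ωᶜ).Infinite) : ∃ t ∈ K, IsIndependent Ω (t • Ω) := by
  obtain ⟨τ, hτ, hind⟩ : ∃ τ : Perm α, τ • k • Ω = k • Ω ∧ IsIndependent Ω (τ • Ω) := by
    rcases splits_or_splits_compl hΩ hΩc h₁ h₂ with hs | hs
    · exact hs.exists_smul_eq_isIndependent
    · obtain ⟨τ, hτ, hind⟩ := hs.exists_smul_eq_isIndependent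
      exact ⟨τ, compl_injective (by rw [← smul_set_compl, hτ]), hind⟩
  exact ⟨τ, mem_of_mem_stabilizer_smul hK hk (mem_stabilizer_iff.2 hτ), hind⟩

end Equiv.Perm

open Equiv

/-- If `ω = Ω₁ ∪ Ω₂` is a partition into two infinite sets and `H` is the
subgroup `{g ∈ Sym(ω) : |g[Ω₁] △ Ω_i| < ℵ₀ for some i ∈ {1,2}}`, then `H` is a
maximal proper subgroup of `Sym(ω)`. -/
theorem stmt_4 (Ω₁ Ω₂ : Set ℕ) (h1 : Ω₁.Infinite) (h2 : Ω₂.Infinite)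
    (hu : Ω₁ ∪ Ω₂ = Set.univ) (hd : Disjoint Ω₁ Ω₂)
    (H : Subgroup (Equiv.Perm ℕ))
    (hH : (H : Set (Equiv.Perm ℕ)) =
      {g : Equiv.Perm ℕ |
        (symmDiff (⇑g '' Ω₁) Ω₁).Finite ∨ (symmDiff (⇑g '' Ω₁) Ω₂).Finite}) :
    H ≠ ⊤ ∧ ∀ K : Subgroup (Equiv.Perm ℕ), H < K → K = ⊤ := by
  obtain rfl : Ω₂ = Ω₁ᶜ := (IsCompl.compl_eq ⟨hd, codisjoint_iff.2 hu⟩).symm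
  have hmem : ∀ g : Perm ℕ,
      g ∈ H ↔ (symmDiff (g • Ω₁) Ω₁).Finite ∨ (symmDiff (g • Ω₁) Ω₁ᶜ).Finite := fun g => by
    rw [← SetLike.mem_coe, hH]
    rfl
  have hstab : stabilizer (Perm ℕ) Ω₁ ≤ H := fun g hg =>
    (hmem g).2 (Or.inl (by rw [mem_stabilizer_iff.1 hg, symmDiff_self]; exact finite_empty))
  refine ⟨fun htop => ?_, fun K hHK => ?_⟩
  · obtain ⟨g, hg⟩ := Perm.exists_isIndependent_smul h1 h2
    rcases (hmem g).1 (htop ▸ Subgroup.mem_top g) with hfin | hfin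
    exacts [hg.infinite_symmDiff.1 hfin, hg.infinite_symmDiff.2 hfin]
  · obtain ⟨k, hkK, hkH⟩ := SetLike.exists_of_lt hHK
    rw [hmem, not_or, Set.not_finite, Set.not_finite] at hkH
    have hK := hstab.trans hHK.le
    obtain ⟨t, htK, ht⟩ := Perm.exists_mem_isIndependent hK hkK h1 h2 hkH.1 hkH.2
    exact Perm.eq_top_of_isIndependent hK htK ht h1 h2
end

section
/- Let ω = Ω₁ ∪ Ω₂ be a partition of ω into two infinite sets, and let H = {g ∈ Sym(ω) : |g[Ω₁] △ Ω_i| < ℵ₀ for some i ∈ {1,2}}. Then H is a meagre subset of Sym(ω) with the Polish topology of pointwise convergence. -/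
/-!
For a finite set `F`, the permutations `g` with `g[Ω₁] △ Ω ⊆ F` form a closed set: both
`x ∈ g[Ω₁]` and `x ∉ g[Ω₁]` are open conditions, saying that `g y = x` for some `y` in `Ω₁`,
resp. in its complement. This closed set has empty interior: given `g` and a finite set `I` of
coordinates, pick `a ∈ Ω₁` and `b ∉ Ω₁` outside `I`, with `g a ∉ F`; then `g ∘ (a b)` agrees
with `g` on `I`, but exactly one of `g[Ω₁]` and `(g ∘ (a b))[Ω₁]` contains `g a`. As there are
countably many finite `F`, the set `H` is a countable union of nowhere dense sets.
-/

/-- The Polish topology of pointwise convergence on `Sym(ω)`, inherited from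
the Baire space `ω^ω`. -/
noncomputable instance permTop : TopologicalSpace (Equiv.Perm ℕ) :=
  TopologicalSpace.induced (fun g : Equiv.Perm ℕ => (g : ℕ → ℕ)) inferInstance

open Set

namespace Equiv.Perm

theorem isOpen_setOf_apply_eq (y x : ℕ) : IsOpen {g : Perm ℕ | g y = x} :=
  ((continuous_apply (A := fun _ : ℕ => ℕ) y).comp continuous_induced_dom).isOpen_preimage {x}
    (isOpen_discrete _)

theorem exists_finset_forall_eqOn_mem {U : Set (Perm ℕ)} (hU : IsOpen U) {g : Perm ℕ}
    (hg : g ∈ U) : ∃ I : Finset ℕ, ∀ p : Perm ℕ, (∀ i ∈ I, p i = g i) → p ∈ U := by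
  obtain ⟨V, hV, rfl⟩ := isOpen_induced_iff.mp hU
  obtain ⟨I, u, hIu, hsub⟩ := isOpen_pi_iff.mp hV _ hg
  exact ⟨I, fun p hp => hsub fun i hi => by simpa [hp i hi] using (hIu i hi).2⟩

theorem isOpen_setOf_mem_image (A : Set ℕ) (x : ℕ) : IsOpen {g : Perm ℕ | x ∈ g '' A} := by
  have : {g : Perm ℕ | x ∈ g '' A} = ⋃ y ∈ A, {g : Perm ℕ | g y = x} := by
    ext g; simp only [mem_ofPred_eq, mem_image, mem_iUnion, exists_prop]
  exact this ▸ isOpen_biUnion fun y _ => isOpen_setOf_apply_eq y x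

theorem isClopen_setOf_mem_image (A : Set ℕ) (x : ℕ) : IsClopen {g : Perm ℕ | x ∈ g '' A} := by
  refine ⟨⟨?_⟩, isOpen_setOf_mem_image A x⟩
  have : {g : Perm ℕ | x ∈ g '' A}ᶜ = {g : Perm ℕ | x ∈ g '' Aᶜ} := by
    ext g; simp
  exact this ▸ isOpen_setOf_mem_image Aᶜ x

def imageSymmDiffSubset (A B F : Set ℕ) : Set (Perm ℕ) :=
  {g | ∀ x ∉ F, (x ∈ g '' A ↔ x ∈ B)}

theorem isClosed_imageSymmDiffSubset (A B F : Set ℕ) : IsClosed (imageSymmDiffSubset A B F) := by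
  simp only [imageSymmDiffSubset, ofPred_forall]
  refine isClosed_iInter fun x => isClosed_iInter fun _ => ?_
  by_cases hx : x ∈ B
  · simpa [hx] using (isClopen_setOf_mem_image A x).isClosed
  · convert (isClopen_setOf_mem_image A x).compl.isClosed using 1
    ext g; simp [hx]

theorem exists_eqOn_mem_image_notMem_image {A : Set ℕ} (hA : A.Infinite) (hAc : Aᶜ.Infinite)
    (g : Perm ℕ) (I : Finset ℕ) {F : Set ℕ} (hF : F.Finite) :
    ∃ p : Perm ℕ, (∀ i ∈ I, p i = g i) ∧ ∃ x ∉ F, x ∈ g '' A ∧ x ∉ p '' A := by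
  obtain ⟨a, haA, haIF⟩ :=
    (hA.sdiff (I.finite_toSet.union (hF.preimage g.injective.injOn))).nonempty
  simp only [mem_union, mem_preimage, not_or] at haIF
  obtain ⟨haI, haF⟩ := haIF
  obtain ⟨b, hbA, hbI⟩ := (hAc.sdiff I.finite_toSet).nonempty
  refine ⟨swap a b |>.trans g, fun i hi => ?_, g a, haF, mem_image_of_mem g haA, ?_⟩
  · rw [trans_apply, swap_apply_of_ne_of_ne (ne_of_mem_of_not_mem hi haI)
      (ne_of_mem_of_not_mem hi hbI)]
  · rintro ⟨y, hyA, hy⟩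
    rw [trans_apply, g.injective.eq_iff, swap_apply_eq_iff, swap_apply_left] at hy
    exact hbA (hy ▸ hyA)

theorem interior_imageSymmDiffSubset {A : Set ℕ} (hA : A.Infinite) (hAc : Aᶜ.Infinite)
    (B : Set ℕ) {F : Set ℕ} (hF : F.Finite) : interior (imageSymmDiffSubset A B F) = ∅ := by
  refine eq_empty_of_forall_notMem fun g hg => ?_
  obtain ⟨I, hI⟩ := exists_finset_forall_eqOn_mem isOpen_interior hg
  obtain ⟨p, hpg, x, hxF, hxg, hxp⟩ := exists_eqOn_mem_image_notMem_image hA hAc g I hF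
  have hgB := interior_subset hg x hxF
  have hpB := interior_subset (hI p hpg) x hxF
  exact hxp (hpB.mpr (hgB.mp hxg))

theorem isMeagre_setOf_finite_symmDiff_image {A : Set ℕ} (hA : A.Infinite) (hAc : Aᶜ.Infinite)
    (B : Set ℕ) : IsMeagre {g : Perm ℕ | (symmDiff (g '' A) B).Finite} := by
  have hcover : {g : Perm ℕ | (symmDiff (g '' A) B).Finite} ⊆
      ⋃ F : Finset ℕ, imageSymmDiffSubset A B F := fun g hg =>
    mem_iUnion.mpr ⟨hg.toFinset, fun x hx => by simpa [mem_symmDiff, iff_def, or_comm] using hx⟩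
  refine (isMeagre_iUnion fun F => IsNowhereDense.isMeagre ?_).mono hcover
  exact (isClosed_imageSymmDiffSubset A B F).isNowhereDense_iff.mpr
    (interior_imageSymmDiffSubset hA hAc B F.finite_toSet)

end Equiv.Perm

theorem stmt_5_general (Ω₁ Ω₂ : Set ℕ) (h1 : Ω₁.Infinite) (h2 : Ω₂.Infinite)
    (hd : Disjoint Ω₁ Ω₂) :
    IsMeagre {g : Equiv.Perm ℕ |
      (symmDiff (⇑g '' Ω₁) Ω₁).Finite ∨ (symmDiff (⇑g '' Ω₁) Ω₂).Finite} := by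
  have hc : Ω₁ᶜ.Infinite := h2.mono hd.subset_compl_left
  rw [ofPred_or]
  exact (Equiv.Perm.isMeagre_setOf_finite_symmDiff_image h1 hc Ω₁).union
    (Equiv.Perm.isMeagre_setOf_finite_symmDiff_image h1 hc Ω₂)

/-- If `ω = Ω₁ ∪ Ω₂` is a partition into two infinite sets, then
`H = {g ∈ Sym(ω) : |g[Ω₁] △ Ω_i| < ℵ₀ for some i ∈ {1,2}}` is a meagre subset
of `Sym(ω)` with the Polish topology of pointwise convergence. -/
theorem stmt_5 (Ω₁ Ω₂ : Set ℕ) (h1 : Ω₁.Infinite) (h2 : Ω₂.Infinite)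
    (hu : Ω₁ ∪ Ω₂ = Set.univ) (hd : Disjoint Ω₁ Ω₂) :
    IsMeagre {g : Equiv.Perm ℕ |
      (symmDiff (⇑g '' Ω₁) Ω₁).Finite ∨ (symmDiff (⇑g '' Ω₁) Ω₂).Finite} :=
  stmt_5_general Ω₁ Ω₂ h1 h2 hd
end

section
/- Let S = Sym(ω), κ a regular cardinal, and suppose ⟨λ_α : α < κ⟩ is a strictly increasing sequence of regular cardinals with λ_α ∈ CF(S) for all α < κ. Suppose the reduced product ∏_{α<κ} λ_α modulo the ideal J^{bd}_κ of bounded subsets of κ has true cofinality λ. Then κ ∈ CF(S) or λ ∈ CF(S). -/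
/-!
Fix chains `⟨G α j : j < λ_α⟩` witnessing `λ_α ∈ CF(S)`. For `g ∈ S` let `h_g(α)` be the least
`j` with `g ∈ G α j`; a cofinal `f ∈ ∏ λ_α` eventually dominates `h_g`. So along the scale
`⟨f_β : β < λ⟩` the subgroups
`H β = {g : g ∈ G α (f_β α) for all but boundedly many α < κ}`
form an increasing chain covering `S`. If every `H β` is proper, this chain witnesses
`λ ∈ CF(S)`. Otherwise some `H β = S`, and then its tails
`K i = ⋂_{i ≤ α < κ} G α (f_β α)`, `i < κ`, form a chain of proper subgroups covering `S`,
so `κ ∈ CF(S)`.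
-/

/-- `S = Sym(ω)` is the union of a chain of `κ` proper subgroups,
indexed by the ordinals below `κ.ord`. -/
def SymUnionChain (κ : Cardinal) : Prop :=
  ∃ G : Ordinal → Subgroup (Equiv.Perm ℕ),
    (∀ i j : Ordinal, i ≤ j → G i ≤ G j) ∧
    (∀ i < κ.ord, G i ≠ ⊤) ∧
    (∀ g : Equiv.Perm ℕ, ∃ i < κ.ord, g ∈ G i)

/-- `κ ∈ CF(S)`: `κ` is regular and `Sym(ω)` is the union of a chain of `κ`
proper subgroups. -/
def MemCF (κ : Cardinal) : Prop :=
  κ.IsRegular ∧ SymUnionChain κ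

/-- `f <_{J^{bd}_o} g`: the set of `α < o` with `g α ≤ f α` is bounded in `o`. -/
def LTModBounded (o : Ordinal) (f g : Ordinal → Ordinal) : Prop :=
  ∃ i < o, ∀ α < o, g α ≤ f α → α < i

theorem LTModBounded.exists_forall_lt {o : Ordinal} {f g : Ordinal → Ordinal}
    (h : LTModBounded o f g) : ∃ i < o, ∀ α, i ≤ α → α < o → f α < g α := by
  obtain ⟨i, hi, hbdd⟩ := h
  exact ⟨i, hi, fun α hiα hα => lt_of_not_ge fun hle => (hbdd α hα hle).not_ge hiα⟩

section EventualSubgroup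

variable {Γ : Type*} [Group Γ] (G : Ordinal → Ordinal → Subgroup Γ) (f : Ordinal → Ordinal)
  (o : Ordinal)

def tailSubgroup (i : Ordinal) : Subgroup Γ :=
  ⨅ α ∈ Set.Ico i o, G α (f α)

/-- The elements `g` with `g ∈ G α (f α)` for `J^{bd}_o`-almost all `α < o`. -/
def eventualSubgroup : Subgroup Γ :=
  ⨆ i : Set.Iio o, tailSubgroup G f o i

variable {G f o}

theorem mem_tailSubgroup {i : Ordinal} {g : Γ} :
    g ∈ tailSubgroup G f o i ↔ ∀ α, i ≤ α → α < o → g ∈ G α (f α) := by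
  simp [tailSubgroup, Subgroup.mem_iInf]

theorem tailSubgroup_mono : Monotone (tailSubgroup G f o) := fun _ _ hij _ hg =>
  mem_tailSubgroup.2 fun α hjα hα => mem_tailSubgroup.1 hg α (hij.trans hjα) hα

theorem tailSubgroup_ne_top {i : Ordinal} (hi : i < o) (hG : G i (f i) ≠ ⊤) :
    tailSubgroup G f o i ≠ ⊤ := by
  intro htop
  refine hG (eq_top_iff.2 fun g _ => ?_)
  exact mem_tailSubgroup.1 (htop ▸ Subgroup.mem_top g) i le_rfl hi

theorem tailSubgroup_le_eventualSubgroup {i : Ordinal} (hi : i < o) :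
    tailSubgroup G f o i ≤ eventualSubgroup G f o :=
  le_iSup (fun i : Set.Iio o => tailSubgroup G f o i) ⟨i, hi⟩

theorem mem_eventualSubgroup (ho : 0 < o) {g : Γ} :
    g ∈ eventualSubgroup G f o ↔ ∃ i < o, g ∈ tailSubgroup G f o i := by
  have : Nonempty (Set.Iio o) := ⟨⟨0, ho⟩⟩
  rw [eventualSubgroup, Subgroup.mem_iSup_of_directed]
  · exact ⟨fun ⟨i, hg⟩ => ⟨i, i.2, hg⟩, fun ⟨i, hi, hg⟩ => ⟨⟨i, hi⟩, hg⟩⟩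
  · rintro ⟨i, hi⟩ ⟨j, hj⟩
    exact ⟨⟨max i j, max_lt (Set.mem_Iio.1 hi) hj⟩, tailSubgroup_mono (le_max_left i j),
      tailSubgroup_mono (le_max_right i j)⟩

theorem eventualSubgroup_mono {f' : Ordinal → Ordinal} (hG : ∀ α < o, Monotone (G α))
    (hff' : LTModBounded o f f') : eventualSubgroup G f o ≤ eventualSubgroup G f' o := by
  obtain ⟨i₀, hi₀, hlt⟩ := hff'.exists_forall_lt
  refine iSup_le fun ⟨i, hi⟩ g hg => tailSubgroup_le_eventualSubgroup (max_lt hi hi₀) ?_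
  refine mem_tailSubgroup.2 fun α hα hαo => hG α hαo (hlt α ((le_max_right _ _).trans hα) hαo).le ?_
  exact mem_tailSubgroup.1 hg α ((le_max_left _ _).trans hα) hαo

theorem mem_eventualSubgroup_of_forall_mem {h : Ordinal → Ordinal} {g : Γ}
    (hG : ∀ α < o, Monotone (G α)) (hg : ∀ α < o, g ∈ G α (h α)) (hhf : LTModBounded o h f) :
    g ∈ eventualSubgroup G f o := by
  obtain ⟨i, hi, hlt⟩ := hhf.exists_forall_lt
  exact tailSubgroup_le_eventualSubgroup hi <|
    mem_tailSubgroup.2 fun α hiα hα => hG α hα (hlt α hiα hα).le (hg α hα)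

end EventualSubgroup

theorem symUnionChain_of_eventualSubgroup_eq_top {κ : Cardinal}
    {G : Ordinal → Ordinal → Subgroup (Equiv.Perm ℕ)} {f : Ordinal → Ordinal} (hκ : 0 < κ.ord)
    (hG : ∀ α < κ.ord, G α (f α) ≠ ⊤) (htop : eventualSubgroup G f κ.ord = ⊤) :
    SymUnionChain κ :=
  ⟨tailSubgroup G f κ.ord, fun _ _ hij => tailSubgroup_mono hij,
    fun i hi => tailSubgroup_ne_top hi (hG i hi),
    fun g => (mem_eventualSubgroup hκ).1 (htop ▸ Subgroup.mem_top g)⟩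

/-- A chain indexed by `μ.ord` need only be increasing below `μ.ord`: past it, replace it by the
union of its members below `μ.ord`. -/
theorem symUnionChain_of_monotoneOn {μ : Cardinal} {H : Ordinal → Subgroup (Equiv.Perm ℕ)}
    (hmono : MonotoneOn H (Set.Iio μ.ord)) (hne : ∀ β < μ.ord, H β ≠ ⊤)
    (hcov : ∀ g, ∃ β < μ.ord, g ∈ H β) : SymUnionChain μ := by
  refine ⟨fun β => ⨆ γ : {γ // γ ≤ β ∧ γ < μ.ord}, H γ, ?_, ?_, ?_⟩
  · exact fun β β' hββ' => iSup_le fun ⟨γ, hγβ, hγ⟩ =>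
      le_iSup_of_le (⟨γ, hγβ.trans hββ', hγ⟩ : {γ // γ ≤ β' ∧ γ < μ.ord}) le_rfl
  · intro β hβ htop
    refine hne β hβ (top_unique (htop ▸ iSup_le fun ⟨γ, hγβ, hγ⟩ => hmono hγ hβ hγβ))
  · intro g
    obtain ⟨β, hβ, hg⟩ := hcov g
    exact ⟨β, hβ, le_iSup (fun γ : {γ // γ ≤ β ∧ γ < μ.ord} => H γ) ⟨β, le_rfl, hβ⟩ hg⟩

theorem stmt_6_general (κ : Cardinal) (hκ : κ.IsRegular)
    (lam : Ordinal → Cardinal)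
    (hCF : ∀ α < κ.ord, MemCF (lam α))
    (lambda : Cardinal) (hlam : lambda.IsRegular)
    (F : Ordinal → Ordinal → Ordinal)
    (hFmem : ∀ β < lambda.ord, ∀ α < κ.ord, F β α < (lam α).ord)
    (hFinc : ∀ β γ : Ordinal, β < γ → γ < lambda.ord →
      ∃ i < κ.ord, ∀ α : Ordinal, α < κ.ord → F γ α ≤ F β α → α < i)
    (hFcof : ∀ h : Ordinal → Ordinal, (∀ α < κ.ord, h α < (lam α).ord) →
      ∃ β < lambda.ord, ∃ i < κ.ord,
        ∀ α : Ordinal, α < κ.ord → F β α ≤ h α → α < i) :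
    MemCF κ ∨ MemCF lambda := by
  choose! G hGmono hGne hGcov using fun α hα => (hCF α hα).2
  have hGmono' : ∀ α < κ.ord, Monotone (G α) := fun α hα _ _ => hGmono α hα _ _
  by_cases htop : ∃ β < lambda.ord, eventualSubgroup G (F β) κ.ord = ⊤
  · obtain ⟨β, hβ, hHβ⟩ := htop
    exact Or.inl ⟨hκ, symUnionChain_of_eventualSubgroup_eq_top (Cardinal.ord_pos.2 hκ.pos)
      (fun α hα => hGne α hα _ (hFmem β hβ α hα)) hHβ⟩
  push Not at htop
  refine Or.inr ⟨hlam, symUnionChain_of_monotoneOn ?_ htop fun g => ?_⟩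
  · intro β _ γ hγ hβγ
    rcases hβγ.eq_or_lt with rfl | hlt
    · exact le_rfl
    · exact eventualSubgroup_mono hGmono' (hFinc β γ hlt hγ)
  · choose! h hh hgh using fun α hα => hGcov α hα g
    obtain ⟨β, hβ, hhF⟩ := hFcof h hh
    exact ⟨β, hβ, mem_eventualSubgroup_of_forall_mem hGmono' hgh hhF⟩

/-- Theorem 2.15: if `κ` is regular, `⟨λ_α : α < κ⟩` is a strictly increasing
sequence of regular cardinals with `λ_α ∈ CF(S)`, and the reduced product
`∏_{α<κ} λ_α` modulo the bounded ideal `J^{bd}_κ` has true cofinality `λ`,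
then `κ ∈ CF(S)` or `λ ∈ CF(S)`. -/
theorem stmt_6 (κ : Cardinal) (hκ : κ.IsRegular)
    (lam : Ordinal → Cardinal)
    (hmono : ∀ α β : Ordinal, α < β → β < κ.ord → lam α < lam β)
    (hreg : ∀ α < κ.ord, (lam α).IsRegular)
    (hCF : ∀ α < κ.ord, MemCF (lam α))
    (lambda : Cardinal) (hlam : lambda.IsRegular)
    (F : Ordinal → Ordinal → Ordinal)
    (hFmem : ∀ β < lambda.ord, ∀ α < κ.ord, F β α < (lam α).ord)
    (hFinc : ∀ β γ : Ordinal, β < γ → γ < lambda.ord →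
      ∃ i < κ.ord, ∀ α : Ordinal, α < κ.ord → F γ α ≤ F β α → α < i)
    (hFcof : ∀ h : Ordinal → Ordinal, (∀ α < κ.ord, h α < (lam α).ord) →
      ∃ β < lambda.ord, ∃ i < κ.ord,
        ∀ α : Ordinal, α < κ.ord → F β α ≤ h α → α < i) :
    MemCF κ ∨ MemCF lambda :=
  stmt_6_general κ hκ lam hCF lambda hlam F hFmem hFinc hFcof
end

section
/- A finite sequence ⟨g₁,…,g_n⟩ of permutations of ω is called generic if (1) every finite A ⊆ ω is contained in a finite B ⊆ ω with g_i[B] = B for all i, and (2) whenever A is finite with g_i[A] = A for all i, A ⊆ B finite, and h_i ∈ Sym(B) extends g_i↾A for each i, there exists π ∈ Sym(ω) fixing A pointwise such that π g_i π^{-1} extends h_i for all i. Prove: if ⟨g₁,…,g_n⟩ and ⟨h₁,…,h_n⟩ are both generic, then there exists f ∈ Sym(ω) with f g_i f^{-1} = h_i for all 1 ≤ i ≤ n. -/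
/-!
Back and forth. Call a permutation `f` together with a finite `g`-invariant set `A` a partial
conjugacy if `f ∘ g i = h i ∘ f` on `A`. To extend one to a given point `m`, enlarge `A ∪ {m}`
to a finite `g`-invariant `B` by (1) for `g`, transport the maps `g i ↾ B` along `f` to
permutations `τ i` of `f[B]` extending `h i ↾ f[A]`, and apply (2) for `h` to get `π` fixing
`f[A]` with `π h_i π⁻¹ = τ i` on `f[B]`; then `π⁻¹ f` conjugates `g i` to `h i` on `B`.
The inverse of a partial conjugacy from `g` to `h` is one from `h` to `g`, which gives the back
step. A chain alternating both steps covers every point in its domains and in its ranges, so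
its union is a permutation conjugating every `g i` to `h i`.
-/

/-- A finite tuple `⟨g 0, …, g (n-1)⟩` of permutations of `ω` is *generic* if
(1) every finite `A ⊆ ω` extends to a finite `B` invariant under all `g i`, and
(2) whenever `A` is finite and invariant under all `g i`, `A ⊆ B` finite, and
`h i ∈ Sym(B)` extends `g i ↾ A` for each `i`, then there is `π ∈ Sym(ω)`
fixing `A` pointwise with `π * g i * π⁻¹` extending `h i` for all `i`. -/
def IsGenericTuple {n : ℕ} (g : Fin n → Equiv.Perm ℕ) : Prop :=
  (∀ A : Finset ℕ, ∃ B : Finset ℕ, A ⊆ B ∧ ∀ i, B.image (g i) = B) ∧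
  (∀ A B : Finset ℕ, A ⊆ B → (∀ i, A.image (g i) = A) →
    ∀ h : Fin n → Equiv.Perm ℕ,
      (∀ i, B.image (h i) = B) → (∀ i, ∀ x ∉ B, h i x = x) →
      (∀ i, ∀ a ∈ A, h i a = g i a) →
      ∃ π : Equiv.Perm ℕ, (∀ a ∈ A, π a = a) ∧
        ∀ i, ∀ b ∈ B, (π * g i * π⁻¹) b = h i b)

open Equiv Finset

section
variable {α : Type*}

theorem Finset.perm_apply_mem_iff_of_image_eq [DecidableEq α] {σ : Perm α} {s : Finset α}
    (hs : s.image σ = s) (x : α) : σ x ∈ s ↔ x ∈ s := by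
  conv_lhs => rw [← hs]
  exact σ.injective.mem_finset_image

theorem Equiv.Perm.exists_restrict_of_image_eq [DecidableEq α] (σ : Perm α) {s : Finset α}
    (hs : s.image σ = s) :
    ∃ τ : Perm α, s.image τ = s ∧ (∀ x ∉ s, τ x = x) ∧ ∀ x ∈ s, τ x = σ x := by
  have hσ := Finset.perm_apply_mem_iff_of_image_eq hs
  refine ⟨Perm.ofSubtype (σ.subtypePerm hσ), ?_, fun x hx => ?_, fun x hx => ?_⟩
  · exact (image_congr fun x hx => Perm.ofSubtype_subtypePerm_of_mem hσ hx).trans hs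
  · exact Perm.ofSubtype_subtypePerm_of_not_mem hσ hx
  · exact Perm.ofSubtype_subtypePerm_of_mem hσ hx

theorem Equiv.Perm.exists_extending_chain (f : ℕ → Perm α) (A : ℕ → Set α)
    (hmono : ∀ k l, k ≤ l → A k ⊆ A l ∧ ∀ a ∈ A k, f l a = f k a)
    (hdom : ∀ x, ∃ k, x ∈ A k) (hran : ∀ y, ∃ k, ∃ a ∈ A k, f k a = y) :
    ∃ F : Perm α, ∀ k, ∀ a ∈ A k, F a = f k a := by
  choose K hK using hdom
  have agree : ∀ k l x, x ∈ A k → x ∈ A l → f k x = f l x := fun k l x hk hl => by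
    rw [← (hmono k _ (le_max_left k l)).2 x hk, (hmono l _ (le_max_right k l)).2 x hl]
  have inj : Function.Injective fun x => f (K x) x := by
    intro x y hxy
    have hx := (hmono _ _ (le_max_left (K x) (K y))).1 (hK x)
    have hy := (hmono _ _ (le_max_right (K x) (K y))).1 (hK y)
    simp only [agree _ _ x (hK x) hx, agree _ _ y (hK y) hy] at hxy
    exact (f _).injective hxy
  have surj : Function.Surjective fun x => f (K x) x := by
    intro y
    obtain ⟨k, a, ha, rfl⟩ := hran y
    exact ⟨a, agree _ _ a (hK a) ha⟩
  exact ⟨Equiv.ofBijective _ ⟨inj, surj⟩, fun k a ha => agree _ _ a (hK a) ha⟩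

end

/-- Only the values of `f` on `dom` matter: a finite partial bijection is represented by any
permutation extending it. -/
structure PartialConj {ι α : Type*} [DecidableEq α] (g h : ι → Perm α) where
  f : Perm α
  dom : Finset α
  image_dom : ∀ i, dom.image (g i) = dom
  conj : ∀ i, ∀ a ∈ dom, f (g i a) = h i (f a)

namespace PartialConj

variable {ι α : Type*} [DecidableEq α] {g h : ι → Perm α}

def codom (p : PartialConj g h) : Finset α := p.dom.image p.f

theorem image_codom (p : PartialConj g h) (i : ι) : p.codom.image (h i) = p.codom :=
  calc p.codom.image (h i) = p.dom.image (h i ∘ p.f) := image_image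
    _ = p.dom.image (p.f ∘ g i) := image_congr fun a ha => (p.conj i a ha).symm
    _ = (p.dom.image (g i)).image p.f := image_image.symm
    _ = p.codom := by rw [p.image_dom, codom]

instance : Inhabited (PartialConj g h) :=
  ⟨⟨1, ∅, fun _ => image_empty _, fun _ _ ha => absurd ha (notMem_empty _)⟩⟩

instance : Preorder (PartialConj g h) where
  le p q := p.dom ⊆ q.dom ∧ ∀ a ∈ p.dom, q.f a = p.f a
  le_refl _ := ⟨subset_rfl, fun _ _ => rfl⟩
  le_trans _ _ _ hpq hqr :=
    ⟨hpq.1.trans hqr.1, fun a ha => (hqr.2 a (hpq.1 ha)).trans (hpq.2 a ha)⟩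

def symm (p : PartialConj g h) : PartialConj h g where
  f := p.f⁻¹
  dom := p.codom
  image_dom := p.image_codom
  conj i b hb := by
    obtain ⟨a, ha, rfl⟩ := mem_image.1 hb
    rw [← p.conj i a ha]
    simp

theorem codom_symm (p : PartialConj g h) : p.symm.codom = p.dom := by
  simp [codom, symm, image_image]

theorem le_symm_of_symm_le {p : PartialConj g h} {q : PartialConj h g} (hpq : p.symm ≤ q) :
    p ≤ q.symm := by
  have hq : ∀ a ∈ p.dom, q.f (p.f a) = a := fun a ha => by
    rw [hpq.2 _ (mem_image_of_mem _ ha)]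
    simp [symm]
  refine ⟨fun a ha => mem_image.2 ⟨p.f a, hpq.1 (mem_image_of_mem _ ha), hq a ha⟩,
    fun a ha => ?_⟩
  exact Perm.inv_eq_iff_eq.2 (hq a ha).symm

end PartialConj

namespace IsGenericTuple

variable {n : ℕ} {g h : Fin n → Perm ℕ}

theorem exists_le_mem_dom (hg : IsGenericTuple g) (hh : IsGenericTuple h)
    (p : PartialConj g h) (m : ℕ) : ∃ q, p ≤ q ∧ m ∈ q.dom := by
  obtain ⟨B, hAB, hB⟩ := hg.1 (insert m p.dom)
  have hpB : p.dom ⊆ B := (subset_insert _ _).trans hAB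
  have hfB : ∀ i, (B.image p.f).image (p.f * g i * p.f⁻¹) = B.image p.f := fun i => by
    conv_rhs => rw [← hB i]
    simp [image_image, Function.comp_def]
  choose τ hτB hτfix hτ using fun i => (p.f * g i * p.f⁻¹).exists_restrict_of_image_eq (hfB i)
  have hτf : ∀ i, ∀ a ∈ B, τ i (p.f a) = p.f (g i a) := fun i a ha => by
    simp [hτ i _ (mem_image_of_mem _ ha)]
  obtain ⟨π, hπfix, hπ⟩ := hh.2 p.codom (B.image p.f) (image_subset_image hpB) p.image_codom
    τ hτB hτfix fun i b hb => by
      obtain ⟨a, ha, rfl⟩ := mem_image.1 hb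
      rw [hτf i a (hpB ha), p.conj i a ha]
  refine ⟨⟨π⁻¹ * p.f, B, hB, fun i a ha => ?_⟩, ⟨hpB, fun a ha => ?_⟩,
    hAB (mem_insert_self _ _)⟩
  · rw [Perm.mul_apply, ← hτf i a ha, ← hπ i _ (mem_image_of_mem _ ha)]
    simp
  · exact Perm.inv_eq_iff_eq.2 (hπfix _ (mem_image_of_mem _ ha)).symm

theorem exists_le_mem_codom (hg : IsGenericTuple g) (hh : IsGenericTuple h)
    (p : PartialConj g h) (m : ℕ) : ∃ q, p ≤ q ∧ m ∈ q.codom := by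
  obtain ⟨q, hpq, hm⟩ := exists_le_mem_dom hh hg p.symm m
  exact ⟨q.symm, PartialConj.le_symm_of_symm_le hpq, q.codom_symm ▸ hm⟩

theorem exists_le_mem_dom_codom (hg : IsGenericTuple g) (hh : IsGenericTuple h)
    (p : PartialConj g h) (m : ℕ) : ∃ q, p ≤ q ∧ m ∈ q.dom ∧ m ∈ q.codom := by
  obtain ⟨q, hpq, hq⟩ := exists_le_mem_dom hg hh p m
  obtain ⟨r, hqr, hr⟩ := exists_le_mem_codom hg hh q m
  exact ⟨r, hpq.trans hqr, hqr.1 hq, hr⟩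

end IsGenericTuple

/-- Claim 2.8: any two generic `n`-tuples of permutations of `ω` are
simultaneously conjugate. -/
theorem stmt_7 {n : ℕ} (g h : Fin n → Equiv.Perm ℕ)
    (hg : IsGenericTuple g) (hh : IsGenericTuple h) :
    ∃ f : Equiv.Perm ℕ, ∀ i, f * g i * f⁻¹ = h i := by
  choose next hnext using hg.exists_le_mem_dom_codom hh
  let p : ℕ → PartialConj g h := fun k => Nat.rec default (fun k q => next q k) k
  have hp : Monotone p := monotone_nat_of_le_succ fun k => (hnext (p k) k).1
  have hmem : ∀ x, x ∈ (p (x + 1)).dom := fun x => (hnext (p x) x).2.1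
  obtain ⟨F, hF⟩ := Perm.exists_extending_chain (fun k => (p k).f) (fun k => (p k).dom)
    (fun _ _ hkl => hp hkl) (fun x => ⟨x + 1, hmem x⟩)
    (fun y => ⟨y + 1, mem_image.1 (hnext (p y) y).2.2⟩)
  refine ⟨F, fun i => mul_inv_eq_iff_eq_mul.2 (Perm.ext fun x => ?_)⟩
  have hgx : g i x ∈ (p (x + 1)).dom := by
    rw [← (p (x + 1)).image_dom i]
    exact mem_image_of_mem _ (hmem x)
  rw [Perm.mul_apply, Perm.mul_apply, hF (x + 1) _ hgx, hF (x + 1) x (hmem x)]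
  exact (p (x + 1)).conj i x (hmem x)
end

section
/- For each n ≥ 1, the set of generic n-tuples {⟨g₁,…,g_n⟩ ∈ Sym(ω)^n : ⟨g₁,…,g_n⟩ is generic} is comeagre in Sym(ω)^n with the product of the Polish topologies. -/
/-!
Both clauses of genericity are countable intersections of open conditions: each instance of (1)
or (2) only involves finitely many values of the `g i`, and there are countably many instances
once `h` is restricted to tuples of permutations of `B`. Each instance is also dense: a finite
partial injection of `ℕ` extends to a permutation, if wanted one preserving a given finite set
containing its domain and range. For (2), starting from a basic neighbourhood prescribing `g₀` on
a finite `F`, first pick `τ` fixing `A` and pushing `B \ A` off `F ∪ g₀[F]`; then `τ h τ⁻¹` can be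
prescribed on `τ[B]` without conflicting with `g₀` on `F`, and `π = τ⁻¹` witnesses (2).
-/

open Set Filter Topology Equiv

theorem exists_perm_eqOn_and_image_eq {α : Type*} [DecidableEq α] {f : α → α} {D S : Finset α}
    (hf : InjOn f D) (hDS : D ⊆ S) (hfS : MapsTo f D S) :
    ∃ σ : Perm α, EqOn σ f D ∧ S.image σ = S := by
  obtain ⟨e, he⟩ := MapsTo.exists_equiv_extend_of_card_eq (α := S) (t := S)
    (s := {x : S | (x : α) ∈ D}) (f := fun x => f x) (by simp) (fun _ hx => hfS hx)
    (fun x hx y hy hxy => Subtype.ext (hf hx hy hxy))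
  refine ⟨Perm.ofSubtype e, fun x hx => ?_, ?_⟩
  · rw [Perm.ofSubtype_apply_of_mem _ (hDS hx)]
    exact he ⟨x, hDS hx⟩ hx
  · refine Finset.eq_of_subset_of_card_le (Finset.image_subset_iff.2 fun x hx => ?_)
      (Finset.card_image_of_injective _ (Equiv.injective _)).ge
    rw [Perm.ofSubtype_apply_of_mem _ hx]
    exact (e ⟨x, hx⟩).2

theorem exists_perm_eqOn {α : Type*} {f : α → α} {D : Set α} (hD : D.Finite)
    (hf : InjOn f D) : ∃ σ : Perm α, EqOn σ f D := by
  have := hD.to_subtype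
  obtain ⟨σ, hσ⟩ := Perm.exists_extending_pair (fun x : D => (x : α)) (D.domRestrict f)
    Subtype.val_injective hf.injective
  exact ⟨σ, fun x hx => hσ ⟨x, hx⟩⟩

theorem Set.InjOn.piecewise_union {α β : Type*} {f g : α → β} {s t : Set α}
    [∀ x, Decidable (x ∈ s)] (hf : InjOn f s) (hg : InjOn g t)
    (hfg : ∀ x ∈ s, ∀ y ∈ t, y ∉ s → f x ≠ g y) : InjOn (s.piecewise f g) (s ∪ t) := by
  rw [← union_sdiff_self, injOn_union disjoint_sdiff_right]
  refine ⟨(piecewise_eqOn s f g).injOn_iff.2 hf, ?_, fun x hx y hy => ?_⟩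
  · exact ((piecewise_eqOn_compl s f g).mono fun y hy => hy.2).injOn_iff.2
      (hg.mono sdiff_subset)
  · rw [piecewise_eq_of_mem s f g hx, piecewise_eq_of_notMem s f g hy.2]
    exact hfg x hx y hy.1 hy.2

theorem exists_perm_fixing_avoiding (A B E : Finset ℕ) :
    ∃ τ : Perm ℕ, (∀ a ∈ A, τ a = a) ∧ ∀ b ∈ B, b ∉ A → τ b ∉ E := by
  classical
  set N := (A ∪ E).sup id + 1
  have hN : ∀ x ∈ A ∪ E, x < N := fun x hx => Nat.lt_succ_of_le (Finset.le_sup (f := id) hx)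
  have hinj : Function.Injective fun x => if x ∈ A then x else x + N := by
    intro x y hxy
    dsimp only at hxy
    split_ifs at hxy with hx hy hy
    · exact hxy
    · have := hN x (Finset.mem_union_left _ hx); omega
    · have := hN y (Finset.mem_union_left _ hy); omega
    · omega
  obtain ⟨τ, hτ⟩ := exists_perm_eqOn (A ∪ B : Finset ℕ).finite_toSet hinj.injOn
  refine ⟨τ, fun a ha => ?_, fun b hb hbA hbE => ?_⟩
  · rw [hτ (Finset.mem_union_left _ ha)]
    exact if_pos ha
  · have hτb : τ b = b + N := (hτ (Finset.mem_union_right _ hb)).trans (if_neg hbA)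
    have := hN _ (Finset.mem_union_right _ (hτb ▸ hbE))
    omega

theorem exists_perm_eqOn_and_conj_eqOn {A B F : Finset ℕ} (hAB : A ⊆ B) {h g₀ τ : Perm ℕ}
    (hB : B.image h = B) (hA : A.image g₀ = A) (hagree : ∀ a ∈ A, h a = g₀ a)
    (hτA : ∀ a ∈ A, τ a = a) (hτB : ∀ b ∈ B, b ∉ A → τ b ∉ F ∪ F.image g₀) :
    ∃ g : Perm ℕ, EqOn g g₀ F ∧ EqOn (τ⁻¹ * g * τ) h B := by
  classical
  set T : Set ℕ := ↑(B.image τ)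
  have hτA' : ∀ a ∈ A, τ⁻¹ a = a := fun a ha => Perm.inv_eq_iff_eq.2 (hτA a ha).symm
  have hAT : ∀ a ∈ A, a ∈ T := fun a ha =>
    Finset.mem_coe.2 (Finset.mem_image.2 ⟨a, hAB ha, hτA a ha⟩)
  have hFT : ∀ x ∈ F, x ∈ T → x ∈ A := by
    intro x hx hxT
    obtain ⟨b, hb, rfl⟩ := Finset.mem_image.1 hxT
    by_cases hbA : b ∈ A
    · rwa [hτA b hbA]
    · exact absurd (Finset.mem_union_left _ hx) (hτB b hb hbA)
  have hg₀T : ∀ y ∈ F, y ∉ T → g₀ y ∉ T := by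
    intro y hy hyT hgyT
    obtain ⟨b, hb, hτb⟩ := Finset.mem_image.1 hgyT
    by_cases hbA : b ∈ A
    · have : g₀ y ∈ A.image g₀ := by rw [hA, ← hτb, hτA b hbA]; exact hbA
      obtain ⟨a, ha, hay⟩ := Finset.mem_image.1 this
      exact hyT (hAT y (g₀.injective hay ▸ ha))
    · exact hτB b hb hbA (hτb ▸ Finset.mem_union_right _ (Finset.mem_image_of_mem _ hy))
  have hτhT : ∀ x ∈ T, τ (h (τ⁻¹ x)) ∈ T := by
    intro x hx
    obtain ⟨b, hb, rfl⟩ := Finset.mem_image.1 hx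
    rw [Perm.coe_inv, symm_apply_apply]
    exact Finset.mem_image_of_mem _ (hB ▸ Finset.mem_image_of_mem _ hb)
  have hk : InjOn (T.piecewise (fun x => τ (h (τ⁻¹ x))) g₀) (T ∪ F) :=
    Set.InjOn.piecewise_union (τ.injective.comp (h.injective.comp τ⁻¹.injective)).injOn
      g₀.injective.injOn fun x hx y hy hyT hxy => hg₀T y hy hyT (hxy ▸ hτhT x hx)
  obtain ⟨g, hg⟩ :=
    exists_perm_eqOn ((B.image τ).finite_toSet.union F.finite_toSet) hk
  refine ⟨g, fun x hx => ?_, fun b hb => ?_⟩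
  · rw [hg (Or.inr hx)]
    by_cases hxT : x ∈ T
    · have hxA := hFT x hx hxT
      have hgxA : g₀ x ∈ A := hA ▸ Finset.mem_image_of_mem _ hxA
      rw [piecewise_eq_of_mem _ _ _ hxT, hτA' x hxA, hagree x hxA, hτA _ hgxA]
    · exact piecewise_eq_of_notMem _ _ _ hxT
  · have hτb : τ b ∈ T := Finset.mem_image_of_mem _ hb
    simp [hg (Or.inl hτb), piecewise_eq_of_mem _ _ _ hτb]

theorem hasBasis_nhds_perm (p : Perm ℕ) :
    (𝓝 p).HasBasis Set.Finite (fun K => {q : Perm ℕ | ∀ x ∈ K, q x = p x}) := by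
  rw [nhds_induced, nhds_pi]
  simp only [nhds_discrete]
  exact (hasBasis_pi_pure _).comap _

section

variable {n : ℕ}

def agreeSet (g : Fin n → Perm ℕ) (F : Finset ℕ) : Set (Fin n → Perm ℕ) :=
  {g' | ∀ i, ∀ x ∈ F, g' i x = g i x}

theorem hasBasis_nhds_agreeSet (g : Fin n → Perm ℕ) :
    (𝓝 g).HasBasis (fun _ => True) (agreeSet g) := by
  rw [nhds_pi]
  refine (hasBasis_pi_same_index (fun i => hasBasis_nhds_perm (g i))
    fun I K hI hK => ⟨⋃ i ∈ I, K i, ?_, fun i hi => ?_⟩).to_hasBasis ?_ ?_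
  · exact hI.biUnion hK
  · exact fun q hq x hx => hq x (mem_biUnion hi hx)
  · rintro ⟨I, K⟩ ⟨-, hK⟩
    exact ⟨hK.toFinset, trivial, fun g' hg' i _ x hx => hg' i x (hK.mem_toFinset.2 hx)⟩
  · exact fun F _ =>
      ⟨⟨univ, F⟩, ⟨finite_univ, F.finite_toSet⟩, fun g' hg' i => hg' i (mem_univ i)⟩

theorem isOpen_of_forall_exists_agreeSet_subset {U : Set (Fin n → Perm ℕ)}
    (h : ∀ g ∈ U, ∃ F, agreeSet g F ⊆ U) : IsOpen U :=
  isOpen_iff_mem_nhds.2 fun g hg => (hasBasis_nhds_agreeSet g).mem_iff.2 <|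
    (h g hg).imp fun _ hF => ⟨trivial, hF⟩

theorem dense_of_forall_agreeSet_inter_nonempty {U : Set (Fin n → Perm ℕ)}
    (h : ∀ g F, (agreeSet g F ∩ U).Nonempty) : Dense U :=
  fun g => (mem_closure_iff_nhds_basis' (hasBasis_nhds_agreeSet g)).2 fun F _ => h g F

def HasInvariantSuperset (A : Finset ℕ) (g : Fin n → Perm ℕ) : Prop :=
  ∃ B : Finset ℕ, A ⊆ B ∧ ∀ i, B.image (g i) = B

theorem isOpen_setOf_hasInvariantSuperset (A : Finset ℕ) :
    IsOpen {g : Fin n → Perm ℕ | HasInvariantSuperset A g} := by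
  refine isOpen_of_forall_exists_agreeSet_subset fun g ⟨B, hAB, hB⟩ => ⟨B, fun g' hg' => ?_⟩
  exact ⟨B, hAB, fun i => (Finset.image_congr fun x hx => hg' i x hx).trans (hB i)⟩

theorem dense_setOf_hasInvariantSuperset (A : Finset ℕ) :
    Dense {g : Fin n → Perm ℕ | HasInvariantSuperset A g} := by
  classical
  refine dense_of_forall_agreeSet_inter_nonempty fun g₀ F => ?_
  set S := A ∪ F ∪ Finset.univ.biUnion fun i => F.image (g₀ i)
  have hFS : F ⊆ S := fun x hx => by simp [S, hx]
  have hg₀S : ∀ i, MapsTo (g₀ i) F S := fun i x hx => Finset.mem_union_right _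
    (Finset.mem_biUnion.2 ⟨i, Finset.mem_univ i, Finset.mem_image_of_mem _ hx⟩)
  choose g hgF hgS using fun i =>
    exists_perm_eqOn_and_image_eq (g₀ i).injective.injOn hFS (hg₀S i)
  exact ⟨g, fun i x hx => hgF i hx, S, fun x hx => by simp [S, hx], hgS⟩

def HasConjugateExtending (A B : Finset ℕ) (h g : Fin n → Perm ℕ) : Prop :=
  (∀ i, A.image (g i) = A) → (∀ i, ∀ a ∈ A, h i a = g i a) →
    ∃ π : Perm ℕ, (∀ a ∈ A, π a = a) ∧ ∀ i, ∀ b ∈ B, (π * g i * π⁻¹) b = h i b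

theorem isOpen_setOf_hasConjugateExtending (A B : Finset ℕ) (h : Fin n → Perm ℕ) :
    IsOpen {g : Fin n → Perm ℕ | HasConjugateExtending A B h g} := by
  refine isOpen_of_forall_exists_agreeSet_subset fun g hg => ?_
  by_cases hyp : (∀ i, A.image (g i) = A) ∧ ∀ i, ∀ a ∈ A, h i a = g i a
  · obtain ⟨π, hπA, hπ⟩ := hg hyp.1 hyp.2
    refine ⟨B.image ⇑π⁻¹, fun g' hg' _ _ => ⟨π, hπA, fun i b hb => ?_⟩⟩
    rw [← hπ i b hb]
    simp only [Perm.mul_apply, hg' i _ (Finset.mem_image_of_mem _ hb)]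
  · refine ⟨A, fun g' hg' hA' hagree' => absurd ⟨fun i => ?_, fun i a ha => ?_⟩ hyp⟩
    · rw [← Finset.image_congr fun x hx => hg' i x hx]; exact hA' i
    · rw [hagree' i a ha, hg' i a ha]

theorem dense_setOf_hasConjugateExtending {A B : Finset ℕ} (hAB : A ⊆ B)
    {h : Fin n → Perm ℕ} (hB : ∀ i, B.image (h i) = B) :
    Dense {g | HasConjugateExtending A B h g} := by
  classical
  refine dense_of_forall_agreeSet_inter_nonempty fun g₀ F => ?_
  by_cases hyp : (∀ i, A.image (g₀ i) = A) ∧ ∀ i, ∀ a ∈ A, h i a = g₀ i a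
  swap
  · exact ⟨g₀, fun _ _ _ => rfl, fun hA hagree => absurd ⟨hA, hagree⟩ hyp⟩
  obtain ⟨hA, hagree⟩ := hyp
  obtain ⟨τ, hτA, hτB⟩ :=
    exists_perm_fixing_avoiding A B (F ∪ Finset.univ.biUnion fun i => F.image (g₀ i))
  choose g hgF hgB using fun i => exists_perm_eqOn_and_conj_eqOn hAB (hB i) (hA i) (hagree i)
    hτA fun b hb hbA hτb => hτB b hb hbA <| Finset.union_subset_union_right
      (Finset.subset_biUnion_of_mem _ (Finset.mem_univ i)) hτb
  refine ⟨g, fun i x hx => hgF i hx, fun _ _ => ⟨τ⁻¹, fun a ha => ?_, fun i b hb => ?_⟩⟩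
  · exact Perm.inv_eq_iff_eq.2 (hτA a ha).symm
  · simpa using hgB i hb

def permTuplesOn (B : Finset ℕ) : Set (Fin n → Perm ℕ) :=
  {h | (∀ i, B.image (h i) = B) ∧ ∀ i, ∀ x ∉ B, h i x = x}

theorem countable_permTuplesOn (B : Finset ℕ) :
    (permTuplesOn B : Set (Fin n → Perm ℕ)).Countable := by
  refine (mapsTo_univ (fun h i (b : B) => h i b) _).countable_of_injOn
    (fun h₁ hh₁ h₂ hh₂ heq => funext fun i => Equiv.ext fun x => ?_) countable_univ
  by_cases hx : x ∈ B
  · exact congrFun (congrFun heq i) ⟨x, hx⟩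
  · rw [hh₁.2 i x hx, hh₂.2 i x hx]

end

theorem stmt_8_general (n : ℕ) :
    {g : Fin n → Equiv.Perm ℕ | IsGenericTuple g} ∈
      residual (Fin n → Equiv.Perm ℕ) := by
  have h₁ : ∀ᶠ g in residual (Fin n → Perm ℕ), ∀ A, HasInvariantSuperset A g :=
    eventually_countable_forall.2 fun A => residual_of_dense_open
      (isOpen_setOf_hasInvariantSuperset A) (dense_setOf_hasInvariantSuperset A)
  have h₂ : ∀ᶠ g in residual (Fin n → Perm ℕ),
      ∀ A B : Finset ℕ, A ⊆ B → ∀ h ∈ permTuplesOn B, HasConjugateExtending A B h g :=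
    eventually_countable_forall.2 fun A => eventually_countable_forall.2 fun B =>
      eventually_imp_distrib_left.2 fun hAB =>
        (eventually_countable_ball (countable_permTuplesOn B)).2 fun h hh =>
          residual_of_dense_open (isOpen_setOf_hasConjugateExtending A B h)
            (dense_setOf_hasConjugateExtending hAB hh.1)
  filter_upwards [h₁, h₂] with g hg₁ hg₂
  exact ⟨hg₁, fun A B hAB hA h hB hfix hagree => hg₂ A B hAB h ⟨hB, hfix⟩ hA hagree⟩

/-- Claim 2.9: for each `n ≥ 1`, the set of generic `n`-tuples is comeagre in
`Sym(ω)^n` with the product topology. -/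
theorem stmt_8 (n : ℕ) (hn : 1 ≤ n) :
    {g : Fin n → Equiv.Perm ℕ | IsGenericTuple g} ∈
      residual (Fin n → Equiv.Perm ℕ) :=
  stmt_8_general n
end

section
/- Let ⟨g_β : β < α⟩ be a sequence of permutations of ω such that for every finite subsequence β₁ < ⋯ < β_n < α, the set C(β₁,…,β_n) = {φ ∈ Sym(ω) : ⟨g_{β₁},…,g_{β_n}⟩⌢φ is generic} is comeagre in Sym(ω). Then for every h ∈ Sym(ω) and every φ in the comeagre set ⋂ over finite subsequences of h^{-1}C(β₁,…,β_n) ∩ C(β₁,…,β_n), both ⟨g_β : β<α⟩⌢φ and ⟨g_β : β<α⟩⌢(hφ) are generic sequences. In particular, if α is countable then such φ exists. -/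
/-- A transfinite sequence `⟨g β : β < α⟩` of permutations is *generic* if
every finite (strictly increasing) subsequence is a generic tuple. -/
def IsGenericSeq (α : Ordinal) (g : Ordinal → Equiv.Perm ℕ) : Prop :=
  ∀ (n : ℕ) (s : Fin n → Ordinal), StrictMono s → (∀ k, s k < α) →
    IsGenericTuple (fun k => g (s k))


/-! `Sym(ω)` embeds as a closed subset of `ω^ω × ω^ω` via `g ↦ (g, g⁻¹)`, so it is Polish and
hence Baire. A finite subsequence of `⟨g_β : β ≤ α⟩` either avoids `α`, and is then generic
because it is generic after appending any `φ` from a dense set, or ends at `α`, and is then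
one of the tuples `⟨g_{β₁},…,g_{βₙ}⟩⌢φ` of the hypothesis. For countable `α` there are
countably many finite subsequences, and the required `φ` lies in the countable intersection
of the comeagre sets `C(β₁,…,βₙ) ∩ h⁻¹C(β₁,…,βₙ)`. -/

open Filter Topology

lemma continuous_perm_coe : Continuous fun g : Equiv.Perm ℕ => (g : ℕ → ℕ) :=
  continuous_induced_dom

lemma continuous_perm_inv_coe :
    Continuous fun g : Equiv.Perm ℕ => ((g⁻¹ : Equiv.Perm ℕ) : ℕ → ℕ) := by
  refine continuous_pi fun m => continuous_discrete_rng.2 fun n => ?_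
  have hpre : (fun g : Equiv.Perm ℕ => (g⁻¹ : Equiv.Perm ℕ) m) ⁻¹' {n} =
      (fun g : Equiv.Perm ℕ => (g : ℕ → ℕ) n) ⁻¹' {m} := by
    ext g
    simp only [Set.mem_preimage, Set.mem_singleton_iff, Equiv.Perm.inv_def]
    exact g.symm_apply_eq.trans eq_comm
  rw [hpre]
  exact ((continuous_apply n).comp continuous_perm_coe).isOpen_preimage _ (isOpen_discrete _)

lemma continuous_perm_mul_left (h : Equiv.Perm ℕ) : Continuous fun φ : Equiv.Perm ℕ => h * φ :=
  continuous_induced_rng.2 <| continuous_pi fun n =>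
    (continuous_of_discreteTopology (f := h)).comp ((continuous_apply n).comp continuous_perm_coe)

def permMulLeftHomeomorph (h : Equiv.Perm ℕ) : Equiv.Perm ℕ ≃ₜ Equiv.Perm ℕ where
  toEquiv := Equiv.mulLeft h
  continuous_toFun := continuous_perm_mul_left h
  continuous_invFun := continuous_perm_mul_left h⁻¹

lemma continuous_apply_apply_nat {X : Type*} [TopologicalSpace X] {f : X → ℕ → ℕ} {k : X → ℕ}
    (hf : Continuous f) (hk : Continuous k) : Continuous fun x => f x (k x) :=
  have heval : Continuous fun q : (ℕ → ℕ) × ℕ => q.1 q.2 :=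
    continuous_prod_of_discrete_right.2 fun n => continuous_apply n
  heval.comp (hf.prodMk hk)

lemma isClosedEmbedding_perm_coe_inv_coe :
    IsClosedEmbedding fun g : Equiv.Perm ℕ => ((g : ℕ → ℕ), ((g⁻¹ : Equiv.Perm ℕ) : ℕ → ℕ)) := by
  set ι := fun g : Equiv.Perm ℕ => ((g : ℕ → ℕ), ((g⁻¹ : Equiv.Perm ℕ) : ℕ → ℕ))
  have hcont : Continuous ι := continuous_perm_coe.prodMk continuous_perm_inv_coe
  have hrange : Set.range ι =
      ⋂ n, {p : (ℕ → ℕ) × (ℕ → ℕ) | p.1 (p.2 n) = n ∧ p.2 (p.1 n) = n} := by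
    ext p
    simp only [Set.mem_range, Set.mem_iInter, Set.mem_ofPred_eq]
    constructor
    · rintro ⟨g, rfl⟩ n
      exact ⟨g.apply_symm_apply n, g.symm_apply_apply n⟩
    · intro hp
      exact ⟨⟨p.1, p.2, fun n => (hp n).2, fun n => (hp n).1⟩, rfl⟩
  refine ⟨⟨.of_comp hcont continuous_fst ⟨rfl⟩,
    fun a b hab => Equiv.ext (congrFun (congrArg Prod.fst hab))⟩, ?_⟩
  rw [hrange]
  refine isClosed_iInter fun n => .inter ?_ ?_ <;> refine isClosed_eq ?_ continuous_const
  · exact continuous_apply_apply_nat continuous_fst ((continuous_apply n).comp continuous_snd)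
  · exact continuous_apply_apply_nat continuous_snd ((continuous_apply n).comp continuous_fst)

instance : PolishSpace (Equiv.Perm ℕ) :=
  isClosedEmbedding_perm_coe_inv_coe.polishSpace

lemma exists_forall_mem_and_apply_mem {X ι : Type*} [TopologicalSpace X] [BaireSpace X]
    [Nonempty X] [Countable ι] (f : X ≃ₜ X) {S : ι → Set X} (hS : ∀ i, S i ∈ residual X) :
    ∃ x, ∀ i, x ∈ S i ∧ f x ∈ S i := by
  have hpre : ∀ i, f ⁻¹' S i ∈ residual X := fun i => by
    rw [← f.residual_map_eq] at hS
    exact hS i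
  obtain ⟨x, hx⟩ := (dense_of_mem_residual
    (countable_iInter_mem.2 fun i => inter_mem (hS i) (hpre i))).nonempty
  exact ⟨x, Set.mem_iInter.1 hx⟩

lemma isGenericTuple_of_isEmpty (g : Fin 0 → Equiv.Perm ℕ) : IsGenericTuple g :=
  ⟨fun A => ⟨A, subset_rfl, fun i => i.elim0⟩,
    fun _ _ _ _ _ _ _ _ => ⟨1, fun _ _ => rfl, fun i => i.elim0⟩⟩

lemma isGenericTuple_of_dense_snoc {n : ℕ} {g : Fin n → Equiv.Perm ℕ}
    (H : Dense {ψ : Equiv.Perm ℕ | IsGenericTuple (Fin.snoc g ψ)}) : IsGenericTuple g := by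
  refine ⟨fun A => ?_, fun A B hAB hA h hB hBout hAh => ?_⟩
  · obtain ⟨ψ, hψ⟩ := H.nonempty
    obtain ⟨B, hAB, hB⟩ := hψ.1 A
    exact ⟨B, hAB, fun i => by simpa using hB i.castSucc⟩
  · -- append to `g` a generic `ψ` fixing `B` pointwise (it exists by density) and `1` to `h`
    have hU : IsOpen {ψ : Equiv.Perm ℕ | ∀ x ∈ B, ψ x = x} := by
      simp only [Set.ofPred_forall]
      exact isOpen_biInter_finset fun x _ =>
        ((continuous_apply x).comp continuous_perm_coe).isOpen_preimage {x} (isOpen_discrete _)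
    obtain ⟨ψ, hψ, hψB⟩ := H.exists_mem_open hU ⟨1, fun _ _ => rfl⟩
    have hψA : A.image ψ = A := by
      rw [Finset.image_congr (g := id) fun a ha => hψB a (hAB ha), Finset.image_id]
    obtain ⟨π, hπA, hπ⟩ := hψ.2 A B hAB (Fin.lastCases (by simpa using hψA) (by simpa using hA))
      (Fin.snoc h 1) (Fin.lastCases (by simp) (by simpa using hB))
      (Fin.lastCases (by simp) (by simpa using hBout))
      (Fin.lastCases (by simpa using fun a ha => (hψB a (hAB ha)).symm) (by simpa using hAh))
    exact ⟨π, hπA, fun i => by simpa using hπ i.castSucc⟩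

lemma isGenericSeq_of_residual_snoc {α : Ordinal} {g : Ordinal → Equiv.Perm ℕ}
    (hcom : ∀ (n : ℕ) (s : Fin n → Ordinal), StrictMono s → (∀ k, s k < α) →
      {φ : Equiv.Perm ℕ | IsGenericTuple (Fin.snoc (fun k => g (s k)) φ)} ∈
        residual (Equiv.Perm ℕ)) :
    IsGenericSeq α g := fun n s hs hlt =>
  isGenericTuple_of_dense_snoc (dense_of_mem_residual (hcom n s hs hlt))

lemma isGenericSeq_add_one {α : Ordinal} {g : Ordinal → Equiv.Perm ℕ} {φ : Equiv.Perm ℕ}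
    (hg : IsGenericSeq α g)
    (hφ : ∀ (n : ℕ) (s : Fin n → Ordinal), StrictMono s → (∀ k, s k < α) →
      IsGenericTuple (Fin.snoc (fun k => g (s k)) φ)) :
    IsGenericSeq (α + 1) (fun β => if β = α then φ else g β) := by
  intro n s hs hlt
  have hle : ∀ k, s k ≤ α := fun k => Order.lt_add_one_iff.1 (hlt k)
  cases n with
  | zero => exact isGenericTuple_of_isEmpty _
  | succ m =>
    by_cases hlast : s (Fin.last m) = α
    · have hinit : ∀ k : Fin m, s k.castSucc < α := fun k => hlast ▸ hs (Fin.castSucc_lt_last k)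
      have heq : (fun k => if s k = α then φ else g (s k)) =
          Fin.snoc (fun k : Fin m => g (s k.castSucc)) φ := by
        funext k
        induction k using Fin.lastCases with
        | last => rw [Fin.snoc_last, if_pos hlast]
        | cast j => rw [Fin.snoc_castSucc, if_neg (hinit j).ne]
      rw [heq]
      exact hφ m _ (hs.comp Fin.strictMono_castSucc) hinit
    · have hall : ∀ k, s k < α := fun k =>
        (hs.monotone (Fin.le_last k)).trans_lt ((hle _).lt_of_ne hlast)
      simpa only [if_neg (hall _).ne] using hg _ s hs hall

/-- Lemma 3.14-style statement: if each set
`C(β₁,…,βₙ) = {φ : ⟨g_{β₁},…,g_{βₙ}⟩⌢φ is generic}` is comeagre, then any `φ`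
lying in every `h⁻¹C(β₁,…,βₙ) ∩ C(β₁,…,βₙ)` makes both `⟨g_β⟩⌢φ` and
`⟨g_β⟩⌢(hφ)` generic sequences; and if `α` is countable such a `φ` exists. -/
theorem stmt_9 (α : Ordinal) (g : Ordinal → Equiv.Perm ℕ)
    (hcom : ∀ (n : ℕ) (s : Fin n → Ordinal), StrictMono s → (∀ k, s k < α) →
      {φ : Equiv.Perm ℕ | IsGenericTuple (Fin.snoc (fun k => g (s k)) φ)} ∈
        residual (Equiv.Perm ℕ)) :
    (∀ h φ : Equiv.Perm ℕ,
      (∀ (n : ℕ) (s : Fin n → Ordinal), StrictMono s → (∀ k, s k < α) →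
        IsGenericTuple (Fin.snoc (fun k => g (s k)) φ) ∧
        IsGenericTuple (Fin.snoc (fun k => g (s k)) (h * φ))) →
      IsGenericSeq (α + 1) (fun β => if β = α then φ else g β) ∧
      IsGenericSeq (α + 1) (fun β => if β = α then h * φ else g β)) ∧
    (α.card ≤ Cardinal.aleph0 → ∀ h : Equiv.Perm ℕ, ∃ φ : Equiv.Perm ℕ,
      ∀ (n : ℕ) (s : Fin n → Ordinal), StrictMono s → (∀ k, s k < α) →
        IsGenericTuple (Fin.snoc (fun k => g (s k)) φ) ∧
        IsGenericTuple (Fin.snoc (fun k => g (s k)) (h * φ))) := by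
  have hg := isGenericSeq_of_residual_snoc hcom
  refine ⟨fun h φ hφ => ⟨isGenericSeq_add_one hg fun n s hs hlt => (hφ n s hs hlt).1,
    isGenericSeq_add_one hg fun n s hs hlt => (hφ n s hs hlt).2⟩, fun hα h => ?_⟩
  have : Countable (Set.Iio α) := by
    rw [Set.countable_coe_iff, ← Cardinal.le_aleph0_iff_set_countable, Cardinal.mk_Iio_ordinal]
    exact Cardinal.lift_le_aleph0.2 hα
  let I := {σ : Σ n, Fin n → Set.Iio α // StrictMono fun k => (σ.2 k : Ordinal)}
  obtain ⟨φ, hφ⟩ := exists_forall_mem_and_apply_mem (ι := I) (permMulLeftHomeomorph h)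
    fun σ => hcom _ _ σ.2 fun k => (σ.1.2 k).2
  exact ⟨φ, fun n s hs hlt => hφ ⟨⟨n, fun k => ⟨s k, hlt k⟩⟩, hs⟩⟩
end

section
/- Let ⟨g⁰_α, g¹_α : α < κ⟩ be permutations of ω such that the combined sequence is generic (every finite subsequence is a generic tuple). Define the forcing notion ℙ whose conditions are pairs ⟨h, F⟩ where h ∈ Sym(A) for some finite A ⊆ ω, F ⊆ κ is finite, and g^τ_α[A] = A for all α ∈ F and τ ∈ {0,1}; with ⟨h₂,F₂⟩ ≤ ⟨h₁,F₁⟩ iff h₁ ⊆ h₂, F₁ ⊆ F₂, and setting B = dom h₂ \ dom h₁ and φ = h₂↾B, we have φ (g⁰_α↾B) φ^{-1} = g¹_α↾B for each α ∈ F₁. Then ℙ is σ-centred. -/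
/-- A condition `⟨h, F⟩` of the forcing `ℙ` of Lemma 2.13: `h ∈ Sym(A)` for a
finite `A ⊆ ω` (extended by the identity off `A`), `F ⊆ κ` finite, and `A` is
invariant under `g⁰_α, g¹_α` for all `α ∈ F`. -/
structure GCond (g0 g1 : Ordinal → Equiv.Perm ℕ) (κ : Cardinal) where
  A : Finset ℕ
  h : ℕ → ℕ
  F : Finset Ordinal
  hperm : A.image h = A
  hid : ∀ x ∉ A, h x = x
  hF : ∀ α ∈ F, α < κ.ord
  hinv0 : ∀ α ∈ F, A.image (g0 α) = A
  hinv1 : ∀ α ∈ F, A.image (g1 α) = A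

/-- The extension relation on `ℙ`: `p ≤ q` iff `h_q ⊆ h_p`, `F_q ⊆ F_p`, and on
`B = dom h_p \ dom h_q` the map `φ = h_p ↾ B` conjugates `g⁰_α ↾ B` to
`g¹_α ↾ B` for every `α ∈ F_q`. -/
def GCond.le {g0 g1 : Ordinal → Equiv.Perm ℕ} {κ : Cardinal}
    (p q : GCond g0 g1 κ) : Prop :=
  q.A ⊆ p.A ∧ (∀ x ∈ q.A, p.h x = q.h x) ∧ q.F ⊆ p.F ∧
  ∀ α ∈ q.F, ∀ x ∈ p.A, x ∉ q.A → p.h (g0 α x) = g1 α (p.h x)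

/-- Lemma 2.13 (part): if the combined sequence `⟨g⁰_α, g¹_α : α < κ⟩` is
generic, then the forcing `ℙ` is σ-centred: there is a colouring of the
conditions by countably many colours such that finitely many conditions of the
same colour always have a common extension. -/
theorem stmt_11 (κ : Cardinal) (g0 g1 : Ordinal → Equiv.Perm ℕ)
    (hgen : ∀ (n : ℕ) (s : Fin n → Ordinal × Bool), Function.Injective s →
      (∀ k, (s k).1 < κ.ord) →
      IsGenericTuple (fun k => (if (s k).2 then g1 else g0) (s k).1)) :
    ∃ c : GCond g0 g1 κ → ℕ,
      ∀ (m : ℕ) (s : Finset (GCond g0 g1 κ)), (∀ p ∈ s, c p = m) →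
        ∃ r : GCond g0 g1 κ, ∀ p ∈ s, GCond.le r p := by
  classical
  refine ⟨fun p => Encodable.encode (p.A, (p.A.sort (· ≤ ·)).map p.h), ?_⟩
  intro m s hs
  rcases s.eq_empty_or_nonempty with rfl | ⟨p₀, hp₀⟩
  · exact ⟨⟨∅, id, ∅, by simp, fun _ _ => rfl, by simp, by simp, by simp⟩,
      fun p hp => absurd hp (by simp)⟩
  have key : ∀ p ∈ s, p.A = p₀.A ∧ ∀ x, p.h x = p₀.h x := by
    intro p hp
    have : (p.A, (p.A.sort (· ≤ ·)).map p.h)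
        = (p₀.A, (p₀.A.sort (· ≤ ·)).map p₀.h) :=
      Encodable.encode_injective (by
        have h1 := hs p hp; have h2 := hs p₀ hp₀
        simp only at h1 h2; rw [h1, h2])
    have hA : p.A = p₀.A := congrArg Prod.fst this
    refine ⟨hA, fun x => ?_⟩
    by_cases hx : x ∈ p.A
    · have hmap : (p.A.sort (· ≤ ·)).map p.h = (p.A.sort (· ≤ ·)).map p₀.h := by
        have := congrArg Prod.snd this
        simpa [hA] using this
      have hx' : x ∈ p.A.sort (· ≤ ·) := (Finset.mem_sort _).2 hx
      exact List.map_eq_map_iff.mp hmap x hx'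
    · rw [p.hid x hx, p₀.hid x (hA ▸ hx)]
  refine ⟨⟨p₀.A, p₀.h, s.sup GCond.F, p₀.hperm, p₀.hid, ?_, ?_, ?_⟩, ?_⟩
  · intro α hα
    obtain ⟨p, hp, hαp⟩ := Finset.mem_sup.mp hα
    exact p.hF α hαp
  · intro α hα
    obtain ⟨p, hp, hαp⟩ := Finset.mem_sup.mp hα
    exact (key p hp).1 ▸ p.hinv0 α hαp
  · intro α hα
    obtain ⟨p, hp, hαp⟩ := Finset.mem_sup.mp hα
    exact (key p hp).1 ▸ p.hinv1 α hαp
  · intro p hp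
    obtain ⟨hA, hh⟩ := key p hp
    refine ⟨hA ▸ Finset.Subset.refl _, fun x _ => (hh x).symm, Finset.le_sup hp, ?_⟩
    intro α _ x hx hx'
    exact absurd (hA ▸ hx) hx'
end

section
/- (Macpherson–Neumann) The symmetric group S = Sym(ω) cannot be written as the union of a countable chain of proper subgroups: if ⟨G_n : n < ω⟩ is an increasing chain of subgroups of S with S = ⋃_n G_n, then G_n = S for some n. Equivalently, the cofinality c(S) is uncountable. -/
/-!
Write `Sym(W) ≤ Sym(α)` for the permutations fixing `Wᶜ` pointwise, and call `A` a moiety when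
`A` and `Aᶜ` are infinite. Realise the countable set as `Ω = (ℕ × ℤ) × ℕ`, with the fibres
`B m` over `(m, 0)`.

If no member of the chain contains a whole `Sym(B m)`, pick `σ m ∈ Sym(B m)` outside a member of
the chain chosen large enough. Each `σ m` is the commutator of one "diagonal" permutation, which
carries all the `σ m` at once, with a level shift in layer `m`, and this contradicts the choice.

So some `G N` contains `Sym(A)` for a moiety `A`. Let `u` map `A` onto a moiety `Y` with
`A ∪ Y = Ω` and `A ∩ Y`, `Yᶜ` infinite. Then `Sym(A)` and `u` generate `Sym(Y)`, and `Sym(A)`,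
`Sym(Y)` generate everything: a product from `Sym(A) Sym(Y)` brings `g '' A` back onto `A`, and
the setwise stabiliser of `A` is `Sym(A) × Sym(Aᶜ)`.
-/

open Equiv Equiv.Perm MulAction Set

theorem Set.Infinite.exists_infinite_subset_infinite_sdiff {α : Type*} {s : Set α}
    (hs : s.Infinite) : ∃ t ⊆ s, t.Infinite ∧ (s \ t).Infinite := by
  let e := hs.natEmbedding
  have he (n : ℕ) : (e n : α) ∈ s := (e n).2
  have hinj : Function.Injective fun n => (e n : α) := Subtype.val_injective.comp e.injective
  refine ⟨range fun n => (e (2 * n) : α), range_subset_iff.mpr fun n => he _,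
    infinite_range_of_injective fun m n h => by simpa using hinj h, ?_⟩
  refine (infinite_range_of_injective (f := fun n => (e (2 * n + 1) : α))
    fun m n h => by simpa using hinj h).mono ?_
  rintro _ ⟨n, rfl⟩
  refine ⟨he _, ?_⟩
  rintro ⟨m, hm⟩
  have : 2 * m = 2 * n + 1 := hinj hm
  omega

theorem Set.nonempty_equiv_of_encard_eq {α : Type*} [Countable α] {s t : Set α}
    (h : s.encard = t.encard) : Nonempty (s ≃ t) :=
  Cardinal.eq.mp (Cardinal.toENat_injOn Cardinal.mk_le_aleph0 Cardinal.mk_le_aleph0 h)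

namespace MacphersonNeumann

variable {α : Type*}

def symOn (W : Set α) : Subgroup (Perm α) := fixingSubgroup (Perm α) Wᶜ

lemma mem_symOn {W : Set α} {g : Perm α} : g ∈ symOn W ↔ ∀ x ∉ W, g x = x := by
  simp [symOn, mem_fixingSubgroup_iff, Perm.smul_def]

lemma symOn_mono {W W' : Set α} (h : W ⊆ W') : symOn W ≤ symOn W' :=
  fixingSubgroup_antitone _ _ (compl_subset_compl.mpr h)

lemma apply_mem_iff_of_mem_symOn {W : Set α} {g : Perm α} (hg : g ∈ symOn W) (x : α) :
    g x ∈ W ↔ x ∈ W := by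
  by_cases hx : x ∈ W
  · refine iff_of_true (by_contra fun h => h ?_) hx
    rwa [g.injective (mem_symOn.mp hg _ h)]
  · rw [mem_symOn.mp hg x hx]

lemma conj_mem_symOn_image {W : Set α} {g : Perm α} (u : Perm α) (hg : g ∈ symOn W) :
    u * g * u⁻¹ ∈ symOn (u '' W) := by
  refine mem_symOn.mpr fun x hx => ?_
  have hx' : u⁻¹ x ∉ W := fun h => hx ⟨_, h, by simp⟩
  rw [Perm.mul_apply, Perm.mul_apply, mem_symOn.mp hg _ hx']
  simp

lemma mem_symOn_sup_symOn_compl_of_image_eq {X : Set α} {g : Perm α} (hg : g '' X = X) :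
    g ∈ symOn X ⊔ symOn Xᶜ := by
  classical
  have hmem (x : α) : g x ∈ X ↔ x ∈ X := by
    conv_lhs => rw [← hg]
    exact g.injective.mem_set_image
  set u := ofSubtype (g.subtypePerm hmem)
  have hu : u ∈ symOn X := mem_symOn.mpr fun x hx => ofSubtype_subtypePerm_of_not_mem hmem hx
  have hv : u⁻¹ * g ∈ symOn Xᶜ := mem_symOn.mpr fun x hx => by
    rw [Perm.mul_apply, Perm.inv_eq_iff_eq, ofSubtype_subtypePerm_of_mem hmem (not_not.mp hx)]
  simpa using Subgroup.mul_mem_sup hu hv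

section Countable

variable [Countable α]

lemma exists_perm_image_eq {S T : Set α} (h : S.encard = T.encard)
    (hc : Sᶜ.encard = Tᶜ.encard) : ∃ π : Perm α, π '' S = T := by
  classical
  obtain ⟨e⟩ := nonempty_equiv_of_encard_eq h
  obtain ⟨f⟩ := nonempty_equiv_of_encard_eq hc
  refine ⟨Equiv.subtypeCongr e f, Subset.antisymm ?_ fun y hy => ?_⟩
  · rintro _ ⟨x, hx, rfl⟩
    simp [Equiv.subtypeCongr, sumCompl, hx]
  · refine ⟨e.symm ⟨y, hy⟩, (e.symm ⟨y, hy⟩).2, ?_⟩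
    simp [Equiv.subtypeCongr, sumCompl]

lemma exists_mem_symOn_image_eq {W C T : Set α} (hTW : T ⊆ W)
    (h : (C ∩ W).encard = T.encard) (hc : (W \ C).encard = (W \ T).encard) :
    ∃ π ∈ symOn W, π '' C = T ∪ (C \ W) := by
  classical
  have encard_val (s : Set α) : (Subtype.val ⁻¹' s : Set W).encard = (W ∩ s).encard := by
    rw [← Subtype.val_injective.encard_image, Subtype.image_preimage_val]
  obtain ⟨π, hπ⟩ := exists_perm_image_eq (S := Subtype.val ⁻¹' C) (T := Subtype.val ⁻¹' T)
    (by rw [encard_val, encard_val, inter_comm, h, inter_eq_right.mpr hTW])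
    (by rw [← preimage_compl, ← preimage_compl, encard_val, encard_val, ← sdiff_eq,
      ← sdiff_eq, hc])
  have h_in : ofSubtype π '' (C ∩ W) = T := by
    rw [inter_comm, ← Subtype.image_preimage_val, image_image]
    simp only [ofSubtype_apply_coe]
    rw [← image_image, hπ, Subtype.image_preimage_val, inter_eq_right.mpr hTW]
  have h_out : ofSubtype π '' (C \ W) = C \ W :=
    EqOn.image_eq_self fun x hx => ofSubtype_apply_of_not_mem π hx.2
  refine ⟨ofSubtype π, mem_symOn.mpr fun x hx => ofSubtype_apply_of_not_mem π hx, ?_⟩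
  rw [← h_in, ← h_out, ← image_union, inter_union_sdiff]

variable {X Y : Set α}

lemma exists_mem_symOn_image_eq_of_compl_subset (hXY : X ∪ Y = univ) (hb : (X ∩ Y).Infinite)
    (hc : Xᶜ.Infinite) {D : Set α} (hD : Yᶜ ⊆ D) (hDY : (D ∩ Y).Infinite)
    (hYD : (Y \ D).Infinite) : ∃ y ∈ symOn Y, y '' D = X := by
  have hXcY : Xᶜ ⊆ Y := compl_subset_iff_union.mpr hXY
  obtain ⟨y, hy, hyD⟩ := exists_mem_symOn_image_eq (W := Y) (C := D) (T := X ∩ Y)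
    inter_subset_right (by rw [hDY.encard_eq, hb.encard_eq])
    (by
      rw [hYD.encard_eq, Infinite.encard_eq]
      exact hc.mono fun z hz => ⟨hXcY hz, fun h => hz h.1⟩)
  refine ⟨y, hy, ?_⟩
  rw [hyD]
  ext z
  have := @hXcY z
  have := @hD z
  simp only [mem_union, mem_inter_iff, mem_sdiff, mem_compl_iff] at *
  tauto

/- Inside `X`, move `C ∩ X` onto `X \ F`, where `F ⊆ X ∩ Y` is as large as `X \ C` but misses
the infinite `b₁ ⊆ X ∩ Y`. -/
lemma exists_mul_image_eq (hXY : X ∪ Y = univ) (hb : (X ∩ Y).Infinite) (hc : Xᶜ.Infinite)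
    {C : Set α} (hCX : (C ∩ X).Infinite) (hCc : Cᶜ.Infinite) :
    ∃ x ∈ symOn X, ∃ y ∈ symOn Y, (y * x) '' C = X := by
  have hXcY : Xᶜ ⊆ Y := compl_subset_iff_union.mpr hXY
  obtain ⟨b₁, hb₁, hb₁_inf, hb₂_inf⟩ := hb.exists_infinite_subset_infinite_sdiff
  obtain ⟨F, hF, hF_encard⟩ := exists_subset_encard_eq (k := (X \ C).encard)
    (hb₂_inf.encard_eq ▸ le_top)
  have hb₁F : b₁ ⊆ X \ F := fun z hz => ⟨(hb₁ hz).1, fun h => (hF h).2 hz⟩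
  obtain ⟨x, hx, hxC⟩ := exists_mem_symOn_image_eq (W := X) (C := C) (T := X \ F) sdiff_subset
    (by rw [hCX.encard_eq, (hb₁_inf.mono hb₁F).encard_eq])
    (by rw [sdiff_sdiff_cancel_left fun z hz => (hF hz).1.1, hF_encard])
  have hYc_sub : Yᶜ ⊆ X \ F ∪ C \ X := fun z hz =>
    Or.inl ⟨by_contra fun h => hz (hXcY h), fun h => hz (hF h).1.2⟩
  have hY_inter : ((X \ F ∪ C \ X) ∩ Y).Infinite :=
    hb₁_inf.mono fun z hz => ⟨Or.inl (hb₁F hz), (hb₁ hz).2⟩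
  have hY_sdiff : (Y \ (X \ F ∪ C \ X)).Infinite := by
    have hsub : F ∪ Xᶜ \ C ⊆ Y \ (X \ F ∪ C \ X) := by
      rintro z (hz | hz)
      · exact ⟨(hF hz).1.2, by simp [hz, (hF hz).1.1]⟩
      · exact ⟨hXcY hz.1, by rintro (h | h); exacts [hz.1 h.1, hz.2 h.1]⟩
    refine Infinite.mono hsub (infinite_union.mpr ?_)
    have hsplit : (X \ C ∪ Xᶜ \ C).Infinite := hCc.mono fun z hz => by
      by_cases h : z ∈ X <;> simp_all
    refine (infinite_union.mp hsplit).imp_left fun h => ?_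
    rwa [← encard_eq_top_iff, hF_encard, encard_eq_top_iff]
  obtain ⟨y, hy, hyC⟩ :=
    exists_mem_symOn_image_eq_of_compl_subset hXY hb hc hYc_sub hY_inter hY_sdiff
  exact ⟨x, hx, y, hy, by rw [Perm.coe_mul, image_comp, hxC, hyC]⟩

lemma mem_symOn_sup_of_infinite_image_inter (hXY : X ∪ Y = univ) (hb : (X ∩ Y).Infinite)
    (hc : Xᶜ.Infinite) {g : Perm α} (hg : (g '' X ∩ X).Infinite) : g ∈ symOn X ⊔ symOn Y := by
  obtain ⟨x, hx, y, hy, hyx⟩ := exists_mul_image_eq hXY hb hc hg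
    (by rw [← g.image_compl]; exact hc.image g.injective.injOn)
  have hstab : y * x * g ∈ symOn X ⊔ symOn Y :=
    sup_le_sup_left (symOn_mono (compl_subset_iff_union.mpr hXY)) _
      (mem_symOn_sup_symOn_compl_of_image_eq (by rw [Perm.coe_mul, image_comp, hyx]))
  have hg : g = x⁻¹ * y⁻¹ * (y * x * g) := by group
  rw [hg]
  exact mul_mem (mul_mem (inv_mem (Subgroup.mem_sup_left hx))
    (inv_mem (Subgroup.mem_sup_right hy))) hstab

theorem symOn_sup_symOn_eq_top (hXY : X ∪ Y = univ) (hb : (X ∩ Y).Infinite)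
    (hXc : Xᶜ.Infinite) (hYc : Yᶜ.Infinite) : symOn X ⊔ symOn Y = ⊤ := by
  refine eq_top_iff.mpr fun g _ => ?_
  by_cases hX : (g '' X ∩ X).Infinite
  · exact mem_symOn_sup_of_infinite_image_inter hXY hb hXc hX
  have hY : (g '' Y ∩ Y).Infinite := by
    have hsub : g '' (X ∩ Y) ⊆ (g '' X ∩ X) ∪ (g '' Y ∩ Y) := by
      rintro _ ⟨z, ⟨hzX, hzY⟩, rfl⟩
      rcases (show g z ∈ X ∪ Y by simp [hXY]) with h | h
      exacts [Or.inl ⟨⟨z, hzX, rfl⟩, h⟩, Or.inr ⟨⟨z, hzY, rfl⟩, h⟩]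
    exact (infinite_union.mp ((hb.image g.injective.injOn).mono hsub)).resolve_left hX
  rw [sup_comm]
  exact mem_symOn_sup_of_infinite_image_inter (by rwa [union_comm]) (by rwa [inter_comm]) hYc hY

theorem exists_symOn_sup_zpowers_eq_top {A : Set α} (hA : A.Infinite) (hAc : Aᶜ.Infinite) :
    ∃ u : Perm α, symOn A ⊔ Subgroup.zpowers u = ⊤ := by
  obtain ⟨A₁, hA₁, hA₁_inf, hA₂_inf⟩ := hA.exists_infinite_subset_infinite_sdiff
  set Y := Aᶜ ∪ A₁
  have hYc : Yᶜ = A \ A₁ := by ext; simp [Y]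
  have hAY : A ∩ Y = A₁ := by ext; simp [Y]; tauto
  obtain ⟨u, hu⟩ := exists_perm_image_eq (S := A) (T := Y)
    (by rw [hA.encard_eq, (hAc.mono subset_union_left).encard_eq])
    (by rw [hYc, hAc.encard_eq, hA₂_inf.encard_eq])
  refine ⟨u, top_le_iff.mp ?_⟩
  rw [← symOn_sup_symOn_eq_top (X := A) (Y := Y)
    (by rw [← union_assoc, union_compl_self, univ_union]) (hAY ▸ hA₁_inf) hAc (hYc ▸ hA₂_inf)]
  refine sup_le le_sup_left fun g hg => ?_
  have hu_mem : u ∈ symOn A ⊔ Subgroup.zpowers u :=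
    Subgroup.mem_sup_right (Subgroup.mem_zpowers u)
  have hconj : u⁻¹ * g * u⁻¹⁻¹ ∈ symOn A := by
    simpa [← hu, image_image] using conj_mem_symOn_image u⁻¹ hg
  have hg : g = u * (u⁻¹ * g * u⁻¹⁻¹) * u⁻¹ := by group
  rw [hg]
  exact mul_mem (mul_mem hu_mem (Subgroup.mem_sup_left hconj)) (inv_mem hu_mem)

theorem exists_eq_top_of_symOn_le {G : ℕ → Subgroup (Perm α)} (hmono : Monotone G)
    (hcover : ∀ g, ∃ n, g ∈ G n) {A : Set α} (hA : A.Infinite) (hAc : Aᶜ.Infinite) {N : ℕ}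
    (hN : symOn A ≤ G N) : ∃ n, G n = ⊤ := by
  obtain ⟨u, hu⟩ := exists_symOn_sup_zpowers_eq_top hA hAc
  obtain ⟨i, hi⟩ := hcover u
  refine ⟨max N i, top_le_iff.mp (hu ▸ sup_le (hN.trans (hmono (le_max_left N i))) ?_)⟩
  exact Subgroup.zpowers_le.mpr (hmono (le_max_right N i) hi)

end Countable

lemma exists_prodExtendRight_eq {γ β : Type*} [DecidableEq γ] {a : γ} {g : Perm (γ × β)}
    (hg : g ∈ symOn {x | x.1 = a}) : ∃ σ : Perm β, prodExtendRight a σ = g := by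
  have hfib {g : Perm (γ × β)} (hg : g ∈ symOn {x | x.1 = a}) (b : β) :
      g (a, b) = (a, (g (a, b)).2) :=
    Prod.ext ((apply_mem_iff_of_mem_symOn hg _).mpr rfl) rfl
  refine ⟨⟨fun b => (g (a, b)).2, fun b => (g⁻¹ (a, b)).2, fun b => ?_, fun b => ?_⟩, ?_⟩
  · simp [← hfib hg]
  · change (g (a, (g⁻¹ (a, b)).2)).2 = b
    rw [← hfib (inv_mem hg)]
    simp
  · ext ⟨c, b⟩ : 1
    by_cases hc : c = a
    · subst hc
      rw [prodExtendRight_apply_eq, hfib hg]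
      rfl
    · rw [prodExtendRight_apply_ne _ hc, mem_symOn.mp hg _ hc]

section Diagonal

variable {β : Type*}

def diagonalPerm (σ : ℕ → Perm β) : Perm ((ℕ × ℤ) × β) :=
  prodShear (Equiv.refl _) fun q => if 0 ≤ q.2 then σ q.1 else Equiv.refl β

def levelShift (m : ℕ) : Perm ((ℕ × ℤ) × β) :=
  prodCongr (prodExtendRight m (Equiv.addRight 1)) (Equiv.refl β)

/- On the layer `m`, `diagonalPerm σ` acts by `σ m` at every level `k ≥ 0`, and conjugating it
by `levelShift m` moves that action to the levels `k ≥ 1`: only level `0` survives. -/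
lemma diagonalPerm_commutator (σ : ℕ → Perm β) (m : ℕ) :
    diagonalPerm σ * levelShift m * (diagonalPerm σ)⁻¹ * (levelShift m)⁻¹ =
      prodExtendRight (m, 0) (σ m) := by
  ext ⟨⟨m', k⟩, b⟩ : 1
  simp only [diagonalPerm, levelShift, prodExtendRight]
  by_cases hm : m' = m
  · subst hm
    rcases lt_trichotomy k 0 with hk | rfl | hk
    · simp [hk.ne, hk.not_ge, show ¬ 0 ≤ k + -1 by omega]
    · simp
    · simp [hk.ne', hk.le, show 0 ≤ k + -1 by omega]
  · by_cases hk : 0 ≤ k <;> simp [hm, hk]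

theorem exists_symOn_fiber_le {G : ℕ → Subgroup (Perm ((ℕ × ℤ) × β))} (hmono : Monotone G)
    (hcover : ∀ g, ∃ n, g ∈ G n) : ∃ N m, symOn {x : (ℕ × ℤ) × β | x.1 = (m, 0)} ≤ G N := by
  by_contra! h
  choose j hj using fun m => hcover (levelShift (β := β) m)
  -- `σ m` avoids a member of the chain that already contains `levelShift m`.
  have (m : ℕ) : ∃ σ : Perm β, prodExtendRight (m, 0) σ ∉ G (max m (j m)) := by
    obtain ⟨g, hg, hgG⟩ := SetLike.not_le_iff_exists.mp (h (max m (j m)) m)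
    obtain ⟨σ, rfl⟩ := exists_prodExtendRight_eq hg
    exact ⟨σ, hgG⟩
  choose σ hσ using this
  obtain ⟨i, hi⟩ := hcover (diagonalPerm σ)
  have hd : diagonalPerm σ ∈ G (max i (j i)) := hmono (le_max_left _ _) hi
  have ht : levelShift i ∈ G (max i (j i)) := hmono (le_max_right _ _) (hj i)
  apply hσ i
  rw [← diagonalPerm_commutator]
  exact mul_mem (mul_mem (mul_mem hd ht) (inv_mem hd)) (inv_mem ht)

end Diagonal

def UncountableCofinality (P : Type*) [Group P] : Prop :=
  ∀ G : ℕ → Subgroup P, Monotone G → (∀ g, ∃ n, g ∈ G n) → ∃ n, G n = ⊤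

lemma UncountableCofinality.of_mulEquiv {P Q : Type*} [Group P] [Group Q] (e : P ≃* Q)
    (h : UncountableCofinality P) : UncountableCofinality Q := by
  intro G hmono hcover
  obtain ⟨n, hn⟩ := h (fun n => (G n).comap e.toMonoidHom)
    (fun i j hij => Subgroup.comap_mono (hmono hij)) (fun g => hcover (e g))
  refine ⟨n, eq_top_iff.mpr fun q _ => ?_⟩
  have : e.symm q ∈ (G n).comap e.toMonoidHom := hn ▸ Subgroup.mem_top _
  simpa using this

theorem uncountableCofinality_perm_prod {β : Type*} [Countable β] [Infinite β] :
    UncountableCofinality (Perm ((ℕ × ℤ) × β)) := by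
  intro G hmono hcover
  obtain ⟨N, m, hN⟩ := exists_symOn_fiber_le hmono hcover
  refine exists_eq_top_of_symOn_le hmono hcover ?_ ?_ hN
  · exact infinite_of_injective_forall_mem (Prod.mk_right_injective ((m, 0) : ℕ × ℤ)) fun _ => rfl
  · exact infinite_of_injective_forall_mem (Prod.mk_right_injective ((m, 1) : ℕ × ℤ))
      fun _ => by simp

theorem uncountableCofinality_perm [Countable α] [Infinite α] :
    UncountableCofinality (Perm α) :=
  uncountableCofinality_perm_prod.of_mulEquiv
    (nonempty_equiv_of_countable.some : (ℕ × ℤ) × ℕ ≃ α).permCongrHom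

end MacphersonNeumann

/-- Macpherson–Neumann: `Sym(ω)` is not the union of a countable increasing
chain of proper subgroups, i.e. `c(Sym(ω)) > ℵ₀`. -/
theorem stmt_12 (G : ℕ → Subgroup (Equiv.Perm ℕ)) (hmono : Monotone G)
    (hcover : ∀ g : Equiv.Perm ℕ, ∃ n, g ∈ G n) :
    ∃ n, G n = ⊤ :=
  MacphersonNeumann.uncountableCofinality_perm G hmono hcover
end

section
/- Let ⟨λ_α : α < κ⟩ be regular cardinals and for each α < κ suppose S = Sym(ω) is written as S = ⋃_{i<λ_α} G^α_i with ⟨G^α_i : i < λ_α⟩ an increasing chain of subgroups. Let D be an ultrafilter on κ and ⟨f_β : β < λ⟩ a <_D-increasing, <_D-cofinal sequence in ∏_{α<κ} λ_α. For β < λ define H_β = {g ∈ S : {α < κ : g ∈ G^α_{f_β(α)}} ∈ D}. Then each H_β is a subgroup of S, H_β ⊆ H_γ for β ≤ γ < λ, and S = ⋃_{β<λ} H_β. -/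
/-- The construction of Theorems 2.1/2.2: given chains `⟨G^α_i : i < λ_α⟩` of
subgroups covering `Sym(ω)`, an ultrafilter `D` on the index set, and a
`<_D`-increasing `<_D`-cofinal sequence `⟨f_β : β < λ⟩` in `∏ λ_α`, the sets
`H_β = {g : {α : g ∈ G^α_{f_β(α)}} ∈ D}` are subgroups, forming an increasing
chain whose union is all of `Sym(ω)`. -/
theorem stmt_13 (ι : Type) (κ : Cardinal) (hι : Cardinal.mk ι = κ)
    (lam : ι → Cardinal) (hreg : ∀ i, (lam i).IsRegular)
    (G : ι → Ordinal → Subgroup (Equiv.Perm ℕ))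
    (hchain : ∀ i, ∀ a b : Ordinal, a ≤ b → G i a ≤ G i b)
    (hcover : ∀ i, ∀ g : Equiv.Perm ℕ, ∃ a < (lam i).ord, g ∈ G i a)
    (D : Ultrafilter ι)
    (lambda : Cardinal)
    (F : Ordinal → ι → Ordinal)
    (hF : ∀ β < lambda.ord, ∀ i, F β i < (lam i).ord)
    (hFinc : ∀ β γ : Ordinal, β < γ → γ < lambda.ord →
      {i | F γ i ≤ F β i} ∉ D)
    (hFcof : ∀ h : ι → Ordinal, (∀ i, h i < (lam i).ord) →
      ∃ β < lambda.ord, {i | F β i ≤ h i} ∉ D) :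
    (∀ β < lambda.ord, ∃ Hβ : Subgroup (Equiv.Perm ℕ),
      (Hβ : Set (Equiv.Perm ℕ)) = {g | {i | g ∈ G i (F β i)} ∈ D}) ∧
    (∀ β γ : Ordinal, β ≤ γ → γ < lambda.ord →
      {g : Equiv.Perm ℕ | {i | g ∈ G i (F β i)} ∈ D} ⊆
        {g : Equiv.Perm ℕ | {i | g ∈ G i (F γ i)} ∈ D}) ∧
    (∀ g : Equiv.Perm ℕ, ∃ β < lambda.ord, {i | g ∈ G i (F β i)} ∈ D) := by
  refine ⟨?_, ?_, ?_⟩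
  · intro β _
    refine ⟨{ carrier := {g | {i | g ∈ G i (F β i)} ∈ D},
              mul_mem' := ?_, one_mem' := ?_, inv_mem' := ?_ }, rfl⟩
    · intro a b ha hb
      exact D.toFilter.mp_mem hb (Filter.mem_of_superset ha
        fun i hi hbi => (G i (F β i)).mul_mem hi hbi)
    · exact Filter.mem_of_superset Filter.univ_mem fun i _ => (G i (F β i)).one_mem
    · intro a ha
      exact Filter.mem_of_superset ha fun i hi => (G i (F β i)).inv_mem hi
  · intro β γ hle hγ g hg
    rcases eq_or_lt_of_le hle with rfl | hlt
    · exact hg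
    · have h1 : {i | F β i < F γ i} ∈ D := by
        have := hFinc β γ hlt hγ
        have h2 := (Ultrafilter.compl_mem_iff_notMem (s := {i | F γ i ≤ F β i})).2 this
        simpa [Set.compl_setOf, not_le] using h2
      exact D.toFilter.mp_mem hg (Filter.mem_of_superset h1
        fun i hi hgi => hchain i _ _ hi.le hgi)
  · intro g
    choose h hlt hmem using fun i => hcover i g
    obtain ⟨β, hβ, hnot⟩ := hFcof h hlt
    refine ⟨β, hβ, ?_⟩
    have h1 : {i | h i < F β i} ∈ D := by
      have h2 := (Ultrafilter.compl_mem_iff_notMem (s := {i | F β i ≤ h i})).2 hnot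
      simpa [Set.compl_setOf, not_le] using h2
    exact Filter.mem_of_superset h1 fun i hi => hchain i _ _ hi.le (hmem i)
end

section
/- Suppose for each n < ω the group S = Sym(ω) is the union of an increasing chain ⟨G^n_i : i < λ_n⟩ of subgroups, and suppose that for every n, every i < λ_n, and every infinite X ⊆ ω, the setwise stabilizer of X in G^n_i does not induce Sym(X) on X. Fix f ∈ ∏_n λ_n and a partition ω = ⋃_n X_n into disjoint infinite sets. Then there exists π ∈ Sym(ω) with π[X_n] = X_n for all n such that for every n and every g ∈ G^n_{f(n)}, g↾X_n ≠ π↾X_n. In particular S ≠ ⋃_n G^n_{f(n)}. -/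
/-!
Diagonalise block by block: on each `X n` pick a permutation that no element of
`G n (f n)` induces, which exists by the stabiliser hypothesis, and glue these into a
single permutation `π` of `ℕ`. Then no `g ∈ G n (f n)` agrees with `π` on `X n`; in
particular `π` itself lies in none of the groups `G n (f n)`.
-/

open Equiv Function Set

theorem Set.existsUnique_mem_of_pairwise_disjoint {α ι : Type*} {X : ι → Set α}
    (hdisj : Pairwise (Disjoint on X)) (hcov : ⋃ i, X i = univ) (x : α) :
    ∃! i, x ∈ X i := by
  obtain ⟨i, hi⟩ := mem_iUnion.mp (hcov ▸ mem_univ x)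
  exact ⟨i, hi, fun j hj => by_contra fun hji => (hdisj hji).ne_of_mem hj hi rfl⟩

theorem Set.image_eq_of_forall_apply_eq {α : Type*} {s : Set α} {σ : Perm s} {g : α → α}
    (h : ∀ x : s, g x = σ x) : g '' s = s := by
  ext y
  constructor
  · rintro ⟨x, hx, rfl⟩
    rw [h ⟨x, hx⟩]
    exact (σ _).2
  · intro hy
    exact ⟨σ.symm ⟨y, hy⟩, (σ.symm _).2, by rw [h, apply_symm_apply]⟩

theorem Equiv.Perm.exists_forall_apply_eq_of_existsUnique_mem {α ι : Type*} {X : ι → Set α}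
    (hX : ∀ x, ∃! i, x ∈ X i) (σ : ∀ i, Perm (X i)) :
    ∃ π : Perm α, ∀ i (x : X i), π x = σ i x := by
  let e := sigmaEquiv X hX
  refine ⟨e.permCongr (sigmaCongrRight σ), fun i x => ?_⟩
  have hx : e.symm x = ⟨i, x⟩ := e.symm_apply_eq.mpr rfl
  simp only [permCongr_apply, hx]
  rfl

theorem stmt_15_general (lam : ℕ → Cardinal)
    (G : ℕ → Ordinal → Subgroup (Equiv.Perm ℕ))
    (hstab : ∀ n, ∀ a < (lam n).ord, ∀ X : Set ℕ, X.Infinite →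
      ¬ (∀ σ : Equiv.Perm ↥X, ∃ g ∈ G n a, ⇑g '' X = X ∧ ∀ x : ↥X, g ↑x = ↑(σ x)))
    (f : ℕ → Ordinal) (hf : ∀ n, f n < (lam n).ord)
    (X : ℕ → Set ℕ) (hinf : ∀ n, (X n).Infinite)
    (hdisj : ∀ m n, m ≠ n → Disjoint (X m) (X n))
    (hcov : (⋃ n, X n) = Set.univ) :
    ∃ π : Equiv.Perm ℕ, (∀ n, ⇑π '' X n = X n) ∧
      (∀ n, ∀ g ∈ G n (f n), ∃ x ∈ X n, g x ≠ π x) ∧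
      (Set.univ : Set (Equiv.Perm ℕ)) ≠ ⋃ n, ↑(G n (f n)) := by
  have hσ : ∀ n, ∃ σ : Perm (X n), ∀ g ∈ G n (f n), ¬ ∀ x : X n, g x = σ x := by
    intro n
    by_contra! h
    refine hstab n (f n) (hf n) (X n) (hinf n) fun σ => ?_
    obtain ⟨g, hg, hgσ⟩ := h σ
    exact ⟨g, hg, image_eq_of_forall_apply_eq hgσ, hgσ⟩
  choose σ hσ using hσ
  obtain ⟨π, hπ⟩ := Perm.exists_forall_apply_eq_of_existsUnique_mem
    (existsUnique_mem_of_pairwise_disjoint hdisj hcov) σ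
  have hdiag : ∀ n, ∀ g ∈ G n (f n), ∃ x ∈ X n, g x ≠ π x := by
    intro n g hg
    by_contra! h
    exact hσ n g hg fun x => (h x x.2).trans (hπ n x)
  refine ⟨π, fun n => image_eq_of_forall_apply_eq (hπ n), hdiag, fun h => ?_⟩
  obtain ⟨n, hn⟩ := mem_iUnion.mp (h ▸ mem_univ π)
  obtain ⟨x, -, hx⟩ := hdiag n π hn
  exact hx rfl

/-- The diagonal argument of Theorem 2.1: if for each `n` the group `Sym(ω)` is
covered by an increasing chain `⟨G^n_i : i < λ_n⟩` none of whose members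
induces the full symmetric group on any infinite set, then for every
`f ∈ ∏ λ_n` and partition `ω = ⋃ X_n` into infinite sets there is a
permutation `π` preserving each `X_n` whose restriction to `X_n` differs from
that of every `g ∈ G^n_{f(n)}`; in particular `Sym(ω) ≠ ⋃_n G^n_{f(n)}`. -/
theorem stmt_15 (lam : ℕ → Cardinal)
    (G : ℕ → Ordinal → Subgroup (Equiv.Perm ℕ))
    (hchain : ∀ n, ∀ a b : Ordinal, a ≤ b → G n a ≤ G n b)
    (hcover : ∀ n, ∀ g : Equiv.Perm ℕ, ∃ a < (lam n).ord, g ∈ G n a)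
    (hstab : ∀ n, ∀ a < (lam n).ord, ∀ X : Set ℕ, X.Infinite →
      ¬ (∀ σ : Equiv.Perm ↥X, ∃ g ∈ G n a, ⇑g '' X = X ∧ ∀ x : ↥X, g ↑x = ↑(σ x)))
    (f : ℕ → Ordinal) (hf : ∀ n, f n < (lam n).ord)
    (X : ℕ → Set ℕ) (hinf : ∀ n, (X n).Infinite)
    (hdisj : ∀ m n, m ≠ n → Disjoint (X m) (X n))
    (hcov : (⋃ n, X n) = Set.univ) :
    ∃ π : Equiv.Perm ℕ, (∀ n, ⇑π '' X n = X n) ∧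
      (∀ n, ∀ g ∈ G n (f n), ∃ x ∈ X n, g x ≠ π x) ∧
      (Set.univ : Set (Equiv.Perm ℕ)) ≠ ⋃ n, ↑(G n (f n)) :=
  stmt_15_general lam G hstab f hf X hinf hdisj hcov
end
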